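/- arXiv:1504.08079 — 9 statements merged into one kernel-verified Lean document; each statement's English description precedes it below -/
import Mathlib

section
/- For any GPPA sequence {x^k} and every k ≥ 1, one has the descent inequality f(x^k) − f(x^{k+1}) ≥ ((t − L)/2)·‖x^k − x^{k+1}‖². -/
/-!
With `d = x^{k+1} - x^k`, comparing the proximal step with the candidate `z = x^k` gives
`g₁(x^{k+1}) + (t/2)‖d‖² ≤ g₁(x^k) + ⟪y^k - ∇g₂(x^k), d⟫`. The subgradient inequality bounds
`⟪y^k, d⟫` by `h(x^{k+1}) - h(x^k)`, and the descent lemma bounds `g₂(x^{k+1})` by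
`g₂(x^k) + ⟪∇g₂(x^k), d⟫ + (L/2)‖d‖²`; adding the three inequalities gives the claim.
-/

open scoped NNReal RealInnerProductSpace

section
variable {E : Type*} [NormedAddCommGroup E] [InnerProductSpace ℝ E]

theorem LipschitzWith.inner_sub_smul_le {F : E → E} {K : ℝ≥0} (hF : LipschitzWith K F)
    (a v : E) {s : ℝ} (hs : 0 ≤ s) :
    ⟪F (a + s • v) - F a, v⟫ ≤ K * s * ‖v‖ ^ 2 := by
  have hdist : ‖F (a + s • v) - F a‖ ≤ K * (s * ‖v‖) := by
    simpa [dist_eq_norm, norm_smul, abs_of_nonneg hs] using hF.dist_le_mul (a + s • v) a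
  calc ⟪F (a + s • v) - F a, v⟫ ≤ ‖F (a + s • v) - F a‖ * ‖v‖ := real_inner_le_norm _ _
    _ ≤ K * (s * ‖v‖) * ‖v‖ := by gcongr
    _ = K * s * ‖v‖ ^ 2 := by ring

variable [CompleteSpace E]

-- The descent lemma: `s ↦ g (a + s • v) - s ⟪g' a, v⟫ - (K/2) s² ‖v‖²` is antitone on `[0, ∞)`.
theorem le_add_inner_add_of_hasGradientAt_of_lipschitzWith {g : E → ℝ} {g' : E → E} {K : ℝ≥0}
    (hg : ∀ z, HasGradientAt g (g' z) z) (hg' : LipschitzWith K g') (a b : E) :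
    g b ≤ g a + ⟪g' a, b - a⟫ + K / 2 * ‖b - a‖ ^ 2 := by
  set v := b - a
  let φ : ℝ → ℝ := fun s => g (a + s • v) - s * ⟪g' a, v⟫ - K / 2 * s ^ 2 * ‖v‖ ^ 2
  have hφ : ∀ s, HasDerivAt φ (⟪g' (a + s • v), v⟫ - ⟪g' a, v⟫ - K * s * ‖v‖ ^ 2) s := by
    intro s
    have hline : HasDerivAt (fun s : ℝ => a + s • v) v s := by
      simpa using ((hasDerivAt_id s).smul_const v).const_add a
    have hgline := (hg (a + s • v)).hasFDerivAt.comp_hasDerivAt s hline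
    refine ((hgline.sub ((hasDerivAt_id s).mul_const ⟪g' a, v⟫)).sub
      (((hasDerivAt_pow 2 s).const_mul (K / 2 : ℝ)).mul_const (‖v‖ ^ 2))).congr_deriv ?_
    rw [InnerProductSpace.toDual_apply_apply]
    push_cast
    ring
  have hanti : AntitoneOn φ (Set.Ici 0) := by
    refine antitoneOn_of_hasDerivWithinAt_nonpos (convex_Ici 0)
      (fun s _ => (hφ s).continuousAt.continuousWithinAt) (fun s _ => (hφ s).hasDerivWithinAt) ?_
    intro s hs
    rw [interior_Ici] at hs
    have hgap := hg'.inner_sub_smul_le a v hs.le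
    rw [inner_sub_left] at hgap
    linarith
  have hφ01 : φ 1 ≤ φ 0 := hanti Set.self_mem_Ici (Set.mem_Ici.mpr zero_le_one) zero_le_one
  simp only [φ, v, one_smul, zero_smul, add_zero, add_sub_cancel] at hφ01
  linarith
end

theorem stmt_1_general {n : ℕ}
    (g₁ : EuclideanSpace ℝ (Fin n) → EReal)
    (g₂ h : EuclideanSpace ℝ (Fin n) → ℝ)
    (g₂' : EuclideanSpace ℝ (Fin n) → EuclideanSpace ℝ (Fin n))
    (L t : ℝ) (hL : 0 ≤ L)
    (hnotbot : ∀ z, g₁ z ≠ ⊥)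
    (hgrad : ∀ z, HasGradientAt g₂ (g₂' z) z)
    (hlip : LipschitzWith L.toNNReal g₂')
    (x y : ℕ → EuclideanSpace ℝ (Fin n))
    (hdom : ∀ k, g₁ (x k) ≠ ⊤)
    (hy : ∀ k z, ⟪y k, z - x k⟫ ≤ h z - h (x k))
    (hmin : ∀ k z,
      g₁ (x (k+1)) - ((⟪y k - g₂' (x k), x (k+1) - x k⟫ : ℝ) : EReal)
        + ((t/2 * ‖x (k+1) - x k‖^2 : ℝ) : EReal)
      ≤ g₁ z - ((⟪y k - g₂' (x k), z - x k⟫ : ℝ) : EReal)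
        + ((t/2 * ‖z - x k‖^2 : ℝ) : EReal)) :
    ∀ k ≥ 1,
      (((t - L)/2 * ‖x k - x (k+1)‖^2 : ℝ) : EReal)
        ≤ (g₁ (x k) + (g₂ (x k) : ℝ) - ((h (x k) : ℝ) : EReal))
          - (g₁ (x (k+1)) + ((g₂ (x (k+1)) : ℝ) : EReal) - ((h (x (k+1)) : ℝ) : EReal)) := by
  intro k _
  have hfinite : ∀ j, g₁ (x j) = ((g₁ (x j)).toReal : EReal) :=
    fun j => (EReal.coe_toReal (hdom j) (hnotbot _)).symm
  have hprox := hmin k (x k)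
  rw [hfinite k, hfinite (k + 1)] at hprox ⊢
  simp only [sub_self, inner_zero_right, norm_zero] at hprox
  norm_cast at hprox ⊢
  have hsmooth := le_add_inner_add_of_hasGradientAt_of_lipschitzWith hgrad hlip (x k) (x (k + 1))
  rw [Real.coe_toNNReal L hL] at hsmooth
  have hsubgrad := hy k (x (k + 1))
  rw [inner_sub_left] at hprox
  rw [norm_sub_rev]
  linarith

/-- Descent inequality for the GPPA: for every `k ≥ 1`,
`f(x^k) − f(x^{k+1}) ≥ ((t − L)/2)·‖x^k − x^{k+1}‖²`, where `f = g₁ + g₂ − h`. -/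
theorem stmt_1 {n : ℕ}
    (g₁ : EuclideanSpace ℝ (Fin n) → EReal)
    (g₂ h : EuclideanSpace ℝ (Fin n) → ℝ)
    (g₂' : EuclideanSpace ℝ (Fin n) → EuclideanSpace ℝ (Fin n))
    (L t : ℝ) (hL : 0 ≤ L) (ht : L < t)
    (hproper : ∃ z, g₁ z ≠ ⊤) (hnotbot : ∀ z, g₁ z ≠ ⊥)
    (hlsc : LowerSemicontinuous g₁)
    (hgrad : ∀ z, HasGradientAt g₂ (g₂' z) z)
    (hlip : LipschitzWith L.toNNReal g₂')
    (hconv : ConvexOn ℝ Set.univ h)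
    (x y : ℕ → EuclideanSpace ℝ (Fin n))
    (hdom : ∀ k, g₁ (x k) ≠ ⊤)
    (hy : ∀ k z, ⟪y k, z - x k⟫ ≤ h z - h (x k))
    (hmin : ∀ k z,
      g₁ (x (k+1)) - ((⟪y k - g₂' (x k), x (k+1) - x k⟫ : ℝ) : EReal)
        + ((t/2 * ‖x (k+1) - x k‖^2 : ℝ) : EReal)
      ≤ g₁ z - ((⟪y k - g₂' (x k), z - x k⟫ : ℝ) : EReal)
        + ((t/2 * ‖z - x k‖^2 : ℝ) : EReal)) :
    ∀ k ≥ 1,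
      (((t - L)/2 * ‖x k - x (k+1)‖^2 : ℝ) : EReal)
        ≤ (g₁ (x k) + (g₂ (x k) : ℝ) - ((h (x k) : ℝ) : EReal))
          - (g₁ (x (k+1)) + ((g₂ (x (k+1)) : ℝ) : EReal) - ((h (x (k+1)) : ℝ) : EReal)) :=
  stmt_1_general g₁ g₂ h g₂' L t hL hnotbot hgrad hlip x y hdom hy hmin
end

section
/- If α = inf_{x∈ℝⁿ} f(x) > −∞, then for any GPPA sequence {x^k} the sequence of values {f(x^k)} is non-increasing and converges to some limit ℓ* ≥ α, and ‖x^k − x^{k+1}‖ → 0 as k → +∞. -/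
open scoped RealInnerProductSpace NNReal
open Filter Topology Set

/-!
The GPPA step is compared with the competitor `z = x^k` in its own subproblem. Adding the
descent lemma `g₂(q) ≤ g₂(p) + ⟪∇g₂(p), q - p⟫ + L/2 ‖q - p‖²` and the subgradient inequality
for `h` gives the sufficient decrease `f(x^{k+1}) + (t - L)/2 ‖x^k - x^{k+1}‖² ≤ f(x^k)`.
Hence `f(x^k)` is non-increasing and bounded below by `inf f`, so it converges, and the
decrements `f(x^k) - f(x^{k+1})`, which dominate `(t - L)/2 ‖x^k - x^{k+1}‖²`, tend to `0`.
-/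

variable {E : Type*} [NormedAddCommGroup E] [InnerProductSpace ℝ E] [CompleteSpace E]

theorem hasDerivAt_comp_line_of_hasGradientAt {g : E → ℝ} {g' : E → E}
    (hg : ∀ z, HasGradientAt g (g' z) z) (u d : E) (s : ℝ) :
    HasDerivAt (fun s : ℝ => g (u + s • d)) ⟪g' (u + s • d), d⟫ s := by
  have hline : HasDerivAt (fun s : ℝ => u + s • d) d s := by
    simpa using ((hasDerivAt_id s).smul_const d).const_add u
  have h := (hg (u + s • d)).hasFDerivAt.comp_hasDerivAt s hline
  simp only [Function.comp_def, InnerProductSpace.toDual_apply_apply] at h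
  exact h

theorem apply_le_add_inner_add_sq_of_lipschitzWith_gradient {g : E → ℝ} {g' : E → E} {K : ℝ≥0}
    (hg : ∀ z, HasGradientAt g (g' z) z) (hK : LipschitzWith K g') (u v : E) :
    g v ≤ g u + ⟪g' u, v - u⟫ + K / 2 * ‖v - u‖ ^ 2 := by
  set d := v - u
  set ψ : ℝ → ℝ := fun s => g (u + s • d) - s * ⟪g' u, d⟫ - K / 2 * s ^ 2 * ‖d‖ ^ 2
  have hψ : ∀ s, HasDerivAt ψ (⟪g' (u + s • d), d⟫ - ⟪g' u, d⟫ - K * s * ‖d‖ ^ 2) s := by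
    intro s
    refine (((hasDerivAt_comp_line_of_hasGradientAt hg u d s).sub
      ((hasDerivAt_id' s).mul_const ⟪g' u, d⟫)).sub
      (((hasDerivAt_pow 2 s).const_mul (K / 2 : ℝ)).mul_const (‖d‖ ^ 2))).congr_deriv ?_
    push_cast
    ring
  have hψ' : ∀ s ∈ interior (Ici (0 : ℝ)),
      ⟪g' (u + s • d), d⟫ - ⟪g' u, d⟫ - K * s * ‖d‖ ^ 2 ≤ 0 := by
    intro s hs
    rw [interior_Ici, mem_Ioi] at hs
    have hlip : ‖g' (u + s • d) - g' u‖ ≤ K * (s * ‖d‖) := by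
      simpa [dist_eq_norm, norm_smul, abs_of_pos hs] using hK.dist_le_mul (u + s • d) u
    calc ⟪g' (u + s • d), d⟫ - ⟪g' u, d⟫ - K * s * ‖d‖ ^ 2
        = ⟪g' (u + s • d) - g' u, d⟫ - K * s * ‖d‖ ^ 2 := by rw [inner_sub_left]
      _ ≤ ‖g' (u + s • d) - g' u‖ * ‖d‖ - K * s * ‖d‖ ^ 2 := by
        gcongr; exact real_inner_le_norm _ _
      _ ≤ K * (s * ‖d‖) * ‖d‖ - K * s * ‖d‖ ^ 2 := by gcongr
      _ = 0 := by ring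
  have hanti : AntitoneOn ψ (Ici 0) :=
    antitoneOn_of_hasDerivWithinAt_nonpos (convex_Ici 0)
      (fun s _ => (hψ s).continuousAt.continuousWithinAt)
      (fun s _ => (hψ s).hasDerivWithinAt) hψ'
  have h01 := hanti self_mem_Ici (show (0 : ℝ) ≤ 1 by norm_num) zero_le_one
  simp only [ψ, zero_smul, one_smul, add_zero] at h01
  rw [show u + d = v from add_sub_cancel u v] at h01
  linarith

theorem sufficient_decrease_of_prox_step {g₂ h : E → ℝ} {g₂' : E → E} {K : ℝ≥0}
    (hg₂ : ∀ z, HasGradientAt g₂ (g₂' z) z) (hK : LipschitzWith K g₂') {a₀ a₁ t : ℝ} {p q v : E}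
    (hv : ⟪v, q - p⟫ ≤ h q - h p)
    (hstep : a₁ - ⟪v - g₂' p, q - p⟫ + t / 2 * ‖q - p‖ ^ 2 ≤ a₀) :
    a₁ + g₂ q - h q + (t - K) / 2 * ‖p - q‖ ^ 2 ≤ a₀ + g₂ p - h p := by
  have hdesc := apply_le_add_inner_add_sq_of_lipschitzWith_gradient hg₂ hK p q
  rw [inner_sub_left] at hstep
  rw [norm_sub_rev]
  linarith

theorem antitone_of_add_mul_sq_le {F e : ℕ → ℝ} {c : ℝ} (hc : 0 ≤ c)
    (hdec : ∀ k, F (k + 1) + c * e k ^ 2 ≤ F k) : Antitone F :=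
  antitone_nat_of_succ_le fun k => by nlinarith [hdec k, mul_nonneg hc (sq_nonneg (e k))]

theorem tendsto_zero_of_add_mul_sq_le {F e : ℕ → ℝ} {c l : ℝ} (hc : 0 < c)
    (hF : Tendsto F atTop (𝓝 l)) (hdec : ∀ k, F (k + 1) + c * e k ^ 2 ≤ F k)
    (he : ∀ k, 0 ≤ e k) : Tendsto e atTop (𝓝 0) := by
  have hgap : Tendsto (fun k => (F k - F (k + 1)) / c) atTop (𝓝 0) := by
    simpa using (hF.sub (hF.comp (tendsto_add_atTop_nat 1))).div_const c
  have hsq : Tendsto (fun k => e k ^ 2) atTop (𝓝 0) :=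
    squeeze_zero (fun k => sq_nonneg _)
      (fun k => by rw [le_div_iff₀ hc]; linarith [hdec k]) hgap
  simpa [Real.sqrt_sq (he _)] using hsq.sqrt

theorem stmt_2_general {n : ℕ}
    (g₁ : EuclideanSpace ℝ (Fin n) → EReal)
    (g₂ h : EuclideanSpace ℝ (Fin n) → ℝ)
    (g₂' : EuclideanSpace ℝ (Fin n) → EuclideanSpace ℝ (Fin n))
    (L t : ℝ) (hL : 0 ≤ L) (ht : L < t)
    (hnotbot : ∀ z, g₁ z ≠ ⊥)
    (hgrad : ∀ z, HasGradientAt g₂ (g₂' z) z)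
    (hlip : LipschitzWith L.toNNReal g₂')
    (f : EuclideanSpace ℝ (Fin n) → EReal)
    (hf : ∀ z, f z = g₁ z + ((g₂ z : ℝ) : EReal) - ((h z : ℝ) : EReal))
    (hbdd : (⨅ z, f z) ≠ ⊥)
    (x y : ℕ → EuclideanSpace ℝ (Fin n))
    (hdom : ∀ k, g₁ (x k) ≠ ⊤)
    (hy : ∀ k z, ⟪y k, z - x k⟫ ≤ h z - h (x k))
    (hmin : ∀ k z,
      g₁ (x (k+1)) - ((⟪y k - g₂' (x k), x (k+1) - x k⟫ : ℝ) : EReal)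
        + ((t/2 * ‖x (k+1) - x k‖^2 : ℝ) : EReal)
      ≤ g₁ z - ((⟪y k - g₂' (x k), z - x k⟫ : ℝ) : EReal)
        + ((t/2 * ‖z - x k‖^2 : ℝ) : EReal)) :
    Antitone (fun k => f (x k)) ∧
    (∃ l : EReal, (⨅ z, f z) ≤ l ∧ Tendsto (fun k => f (x k)) atTop (𝓝 l)) ∧
    Tendsto (fun k => ‖x k - x (k+1)‖) atTop (𝓝 0) := by
  have hg₁ : ∀ k, g₁ (x k) = (g₁ (x k)).toReal := fun k =>
    (EReal.coe_toReal (hdom k) (hnotbot _)).symm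
  set F : ℕ → ℝ := fun k => (g₁ (x k)).toReal + g₂ (x k) - h (x k)
  have hfx : ∀ k, f (x k) = F k := fun k => by
    rw [hf, hg₁, ← EReal.coe_add, ← EReal.coe_sub]
  have hinf : ∀ k, (⨅ z, f z) ≤ F k := fun k => hfx k ▸ iInf_le f (x k)
  have hdec : ∀ k, F (k + 1) + (t - L) / 2 * ‖x k - x (k + 1)‖ ^ 2 ≤ F k := by
    intro k
    have hstep := hmin k (x k)
    simp only [sub_self, inner_zero_right, norm_zero, EReal.coe_zero, sub_zero, add_zero,
      ne_eq, OfNat.ofNat_ne_zero, not_false_eq_true, zero_pow, mul_zero] at hstep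
    rw [hg₁ (k + 1), hg₁ k, ← EReal.coe_sub, ← EReal.coe_add, EReal.coe_le_coe_iff] at hstep
    simpa only [Real.coe_toNNReal L hL] using
      sufficient_decrease_of_prox_step hgrad hlip (hy k (x (k + 1))) hstep
  have hc : 0 < (t - L) / 2 := by linarith
  have hFanti : Antitone F := antitone_of_add_mul_sq_le hc.le hdec
  have hFbdd : BddBelow (range F) := ⟨(⨅ z, f z).toReal, by
    rintro _ ⟨k, rfl⟩
    simpa using EReal.toReal_le_toReal (hinf k) hbdd (EReal.coe_ne_top _)⟩
  have hFlim := tendsto_atTop_ciInf hFanti hFbdd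
  simp only [hfx]
  exact ⟨EReal.coe_strictMono.monotone.comp_antitone hFanti,
    ⟨_, ge_of_tendsto' (EReal.tendsto_coe.mpr hFlim) hinf,
      EReal.tendsto_coe.mpr hFlim⟩,
    tendsto_zero_of_add_mul_sq_le hc hFlim hdec fun _ => norm_nonneg _⟩

/-- If `α = inf f > −∞`, then for any GPPA sequence the values `f(x^k)` are non-increasing
and converge to some limit `ℓ* ≥ α`, and `‖x^k − x^{k+1}‖ → 0`. Here `f = g₁ + g₂ − h`. -/
theorem stmt_2 {n : ℕ}
    (g₁ : EuclideanSpace ℝ (Fin n) → EReal)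
    (g₂ h : EuclideanSpace ℝ (Fin n) → ℝ)
    (g₂' : EuclideanSpace ℝ (Fin n) → EuclideanSpace ℝ (Fin n))
    (L t : ℝ) (hL : 0 ≤ L) (ht : L < t)
    (hproper : ∃ z, g₁ z ≠ ⊤) (hnotbot : ∀ z, g₁ z ≠ ⊥)
    (hlsc : LowerSemicontinuous g₁)
    (hgrad : ∀ z, HasGradientAt g₂ (g₂' z) z)
    (hlip : LipschitzWith L.toNNReal g₂')
    (hconv : ConvexOn ℝ Set.univ h)
    (f : EuclideanSpace ℝ (Fin n) → EReal)
    (hf : ∀ z, f z = g₁ z + ((g₂ z : ℝ) : EReal) - ((h z : ℝ) : EReal))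
    (hbdd : (⨅ z, f z) ≠ ⊥)
    (x y : ℕ → EuclideanSpace ℝ (Fin n))
    (hdom : ∀ k, g₁ (x k) ≠ ⊤)
    (hy : ∀ k z, ⟪y k, z - x k⟫ ≤ h z - h (x k))
    (hmin : ∀ k z,
      g₁ (x (k+1)) - ((⟪y k - g₂' (x k), x (k+1) - x k⟫ : ℝ) : EReal)
        + ((t/2 * ‖x (k+1) - x k‖^2 : ℝ) : EReal)
      ≤ g₁ z - ((⟪y k - g₂' (x k), z - x k⟫ : ℝ) : EReal)
        + ((t/2 * ‖z - x k‖^2 : ℝ) : EReal)) :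
    Antitone (fun k => f (x k)) ∧
    (∃ l : EReal, (⨅ z, f z) ≤ l ∧ Tendsto (fun k => f (x k)) atTop (𝓝 l)) ∧
    Tendsto (fun k => ‖x k - x (k+1)‖) atTop (𝓝 0) :=
  stmt_2_general g₁ g₂ h g₂' L t hL ht hnotbot hgrad hlip f hf hbdd x y hdom hy hmin
end

section
/- If α = inf_{x∈ℝⁿ} f(x) > −∞, then for any GPPA sequence {x^k} and every m ∈ ℕ one has Σ_{k=1}^{m} ‖x^k − x^{k+1}‖² ≤ (2/(t − L))·(f(x¹) − α); in particular the series Σ_k ‖x^k − x^{k+1}‖² converges. -/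
/-!
Testing the minimality of `x^{k+1}` against `z = x^k` and combining it with the subgradient
inequality for `h` at `x^k` and the descent lemma
`g₂ b ≤ g₂ a + ⟪∇g₂ a, b - a⟫ + L/2 ‖b - a‖²` yields the sufficient decrease
`f (x^{k+1}) + (t - L)/2 ‖x^k - x^{k+1}‖² ≤ f (x^k)`. Summing telescopes, and `f ≥ α`
bounds the partial sums.
-/

open scoped RealInnerProductSpace NNReal

section

variable {E : Type*} [NormedAddCommGroup E] [InnerProductSpace ℝ E] [CompleteSpace E]

theorem le_add_inner_add_of_lipschitzWith_gradient {g : E → ℝ} {g' : E → E} {K : ℝ≥0}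
    (hgrad : ∀ z, HasGradientAt g (g' z) z) (hlip : LipschitzWith K g') (a b : E) :
    g b ≤ g a + ⟪g' a, b - a⟫ + K / 2 * ‖b - a‖ ^ 2 := by
  set v := b - a
  set φ : ℝ → ℝ := fun s ↦ g (a + s • v) - s * ⟪g' a, v⟫ - K / 2 * s ^ 2 * ‖v‖ ^ 2
  have hφ : ∀ s, HasDerivAt φ (⟪g' (a + s • v) - g' a, v⟫ - K * s * ‖v‖ ^ 2) s := by
    intro s
    have hline : HasDerivAt (fun s : ℝ ↦ a + s • v) v s := by
      simpa using ((hasDerivAt_id s).smul_const v).const_add a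
    have hg : HasDerivAt (fun s : ℝ ↦ g (a + s • v)) ⟪g' (a + s • v), v⟫ s := by
      simpa [Function.comp_def, InnerProductSpace.toDual_apply_apply] using
        (hgrad (a + s • v)).hasFDerivAt.comp_hasDerivAt s hline
    refine ((hg.sub ((hasDerivAt_id s).mul_const ⟪g' a, v⟫)).sub
      (((hasDerivAt_pow 2 s).const_mul (K / 2 : ℝ)).mul_const (‖v‖ ^ 2))).congr_deriv ?_
    simp only [inner_sub_left, Nat.cast_ofNat]
    ring
  have hφ_nonpos : ∀ s, 0 ≤ s → ⟪g' (a + s • v) - g' a, v⟫ - K * s * ‖v‖ ^ 2 ≤ 0 := by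
    intro s hs
    have : ⟪g' (a + s • v) - g' a, v⟫ ≤ K * s * ‖v‖ ^ 2 :=
      calc ⟪g' (a + s • v) - g' a, v⟫ ≤ ‖g' (a + s • v) - g' a‖ * ‖v‖ := real_inner_le_norm _ _
        _ ≤ K * ‖(a + s • v) - a‖ * ‖v‖ := by gcongr; exact hlip.norm_sub_le _ _
        _ = K * s * ‖v‖ ^ 2 := by
          rw [add_sub_cancel_left, norm_smul, Real.norm_of_nonneg hs]; ring
    linarith
  have hanti : AntitoneOn φ (Set.Ici 0) :=
    antitoneOn_of_hasDerivWithinAt_nonpos (convex_Ici 0)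
      (fun s _ ↦ (hφ s).continuousAt.continuousWithinAt) (fun s _ ↦ (hφ s).hasDerivWithinAt)
      (fun s hs ↦ hφ_nonpos s (by rw [interior_Ici] at hs; exact hs.le))
  have hφ01 : φ 1 ≤ φ 0 := hanti Set.self_mem_Ici (Set.mem_Ici.2 zero_le_one) zero_le_one
  have hb : a + v = b := add_sub_cancel a b
  norm_num [φ, hb] at hφ01
  linarith

def IsGPPAStep (g₁ : E → EReal) (g₂' : E → E) (t : ℝ) (x y x' : E) : Prop :=
  ∀ z, g₁ x' - ((⟪y - g₂' x, x' - x⟫ : ℝ) : EReal) + ((t / 2 * ‖x' - x‖ ^ 2 : ℝ) : EReal)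
    ≤ g₁ z - ((⟪y - g₂' x, z - x⟫ : ℝ) : EReal) + ((t / 2 * ‖z - x‖ ^ 2 : ℝ) : EReal)

theorem IsGPPAStep.sufficient_decrease {g₁ : E → EReal} {g₂ h : E → ℝ} {g₂' : E → E}
    {K : ℝ≥0} {t : ℝ} {x y x' : E}
    (hgrad : ∀ z, HasGradientAt g₂ (g₂' z) z) (hlip : LipschitzWith K g₂')
    (hx : g₁ x ≠ ⊤) (hx_bot : g₁ x ≠ ⊥) (hx' : g₁ x' ≠ ⊤) (hx'_bot : g₁ x' ≠ ⊥)
    (hy : ∀ z, ⟪y, z - x⟫ ≤ h z - h x) (hstep : IsGPPAStep g₁ g₂' t x y x') :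
    (g₁ x').toReal + g₂ x' - h x' + (t - K) / 2 * ‖x - x'‖ ^ 2
      ≤ (g₁ x).toReal + g₂ x - h x := by
  have hprox : (g₁ x').toReal - ⟪y - g₂' x, x' - x⟫ + t / 2 * ‖x' - x‖ ^ 2 ≤ (g₁ x).toReal := by
    have := hstep x
    rw [← EReal.coe_toReal hx hx_bot, ← EReal.coe_toReal hx' hx'_bot] at this
    norm_num at this
    exact_mod_cast this
  have hdescent := le_add_inner_add_of_lipschitzWith_gradient hgrad hlip x x'
  rw [inner_sub_left] at hprox
  rw [norm_sub_rev]
  linarith [hy x']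

end

theorem sum_Ico_le_of_sufficient_decrease {F d : ℕ → ℝ} {c A : ℝ} (hc : 0 < c)
    (hdec : ∀ k, F (k + 1) + c * d k ≤ F k) (hA : ∀ k, A ≤ F k) {a b : ℕ} (hab : a ≤ b) :
    ∑ k ∈ Finset.Ico a b, d k ≤ (F a - A) / c := by
  rw [le_div_iff₀' hc]
  calc c * ∑ k ∈ Finset.Ico a b, d k = ∑ k ∈ Finset.Ico a b, c * d k := Finset.mul_sum _ _ _
    _ ≤ ∑ k ∈ Finset.Ico a b, (F k - F (k + 1)) :=
        Finset.sum_le_sum fun k _ ↦ by linarith [hdec k]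
    _ = F a - F b := by
        rw [← neg_sub, ← Finset.sum_Ico_sub F hab, ← Finset.sum_neg_distrib]; simp only [neg_sub]
    _ ≤ F a - A := by linarith [hA b]

theorem stmt_3_general {n : ℕ}
    (g₁ : EuclideanSpace ℝ (Fin n) → EReal)
    (g₂ h : EuclideanSpace ℝ (Fin n) → ℝ)
    (g₂' : EuclideanSpace ℝ (Fin n) → EuclideanSpace ℝ (Fin n))
    (L t : ℝ) (hL : 0 ≤ L) (ht : L < t)
    (hnotbot : ∀ z, g₁ z ≠ ⊥)
    (hgrad : ∀ z, HasGradientAt g₂ (g₂' z) z)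
    (hlip : LipschitzWith L.toNNReal g₂')
    (f : EuclideanSpace ℝ (Fin n) → EReal)
    (hf : ∀ z, f z = g₁ z + ((g₂ z : ℝ) : EReal) - ((h z : ℝ) : EReal))
    (hbdd : (⨅ z, f z) ≠ ⊥)
    (x y : ℕ → EuclideanSpace ℝ (Fin n))
    (hdom : ∀ k, g₁ (x k) ≠ ⊤)
    (hy : ∀ k z, ⟪y k, z - x k⟫ ≤ h z - h (x k))
    (hmin : ∀ k z,
      g₁ (x (k+1)) - ((⟪y k - g₂' (x k), x (k+1) - x k⟫ : ℝ) : EReal)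
        + ((t/2 * ‖x (k+1) - x k‖^2 : ℝ) : EReal)
      ≤ g₁ z - ((⟪y k - g₂' (x k), z - x k⟫ : ℝ) : EReal)
        + ((t/2 * ‖z - x k‖^2 : ℝ) : EReal)) :
    (∀ m : ℕ,
      ((∑ k ∈ Finset.Icc 1 m, ‖x k - x (k+1)‖^2 : ℝ) : EReal)
        ≤ ((2/(t - L) : ℝ) : EReal) * (f (x 1) - ⨅ z, f z)) ∧
    Summable (fun k => ‖x k - x (k+1)‖^2) := by
  set F : ℕ → ℝ := fun k ↦ (g₁ (x k)).toReal + g₂ (x k) - h (x k)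
  have hfF : ∀ k, f (x k) = F k := fun k ↦ by
    rw [hf, ← EReal.coe_toReal (hdom k) (hnotbot _)]; norm_cast
  have hinf_ne_top : (⨅ z, f z) ≠ ⊤ :=
    ne_top_of_le_ne_top (hfF 0 ▸ EReal.coe_ne_top _) (iInf_le _ (x 0))
  set A := (⨅ z, f z).toReal
  have hA : ((A : ℝ) : EReal) = ⨅ z, f z := EReal.coe_toReal hinf_ne_top hbdd
  have hAF : ∀ k, A ≤ F k := fun k ↦ by
    have := iInf_le f (x k); rwa [← hA, hfF, EReal.coe_le_coe_iff] at this
  have hdec : ∀ k, F (k + 1) + (t - L) / 2 * ‖x k - x (k + 1)‖ ^ 2 ≤ F k := fun k ↦ by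
    have := IsGPPAStep.sufficient_decrease hgrad hlip (hdom k) (hnotbot _) (hdom (k + 1))
      (hnotbot _) (hy k) (hmin k)
    rwa [Real.coe_toNNReal _ hL] at this
  have hc : 0 < (t - L) / 2 := half_pos (sub_pos.2 ht)
  refine ⟨fun m ↦ ?_, summable_of_sum_range_le (c := (F 0 - A) / ((t - L) / 2))
    (fun k ↦ by positivity) fun m ↦ ?_⟩
  · rw [hfF, ← hA, ← EReal.coe_sub, ← EReal.coe_mul, EReal.coe_le_coe_iff,
      ← Finset.Ico_add_one_right_eq_Icc]
    convert sum_Ico_le_of_sufficient_decrease hc hdec hAF (Nat.le_add_left 1 m) using 1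
    rw [div_div_eq_mul_div]; ring
  · rw [Finset.range_eq_Ico]
    exact sum_Ico_le_of_sufficient_decrease hc hdec hAF (Nat.zero_le m)

/-- If `α = inf f > −∞`, then for any GPPA sequence and every `m`,
`Σ_{k=1}^{m} ‖x^k − x^{k+1}‖² ≤ (2/(t−L))(f(x¹) − α)`; in particular the series
`Σ_k ‖x^k − x^{k+1}‖²` converges. Here `f = g₁ + g₂ − h`. -/
theorem stmt_3 {n : ℕ}
    (g₁ : EuclideanSpace ℝ (Fin n) → EReal)
    (g₂ h : EuclideanSpace ℝ (Fin n) → ℝ)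
    (g₂' : EuclideanSpace ℝ (Fin n) → EuclideanSpace ℝ (Fin n))
    (L t : ℝ) (hL : 0 ≤ L) (ht : L < t)
    (hproper : ∃ z, g₁ z ≠ ⊤) (hnotbot : ∀ z, g₁ z ≠ ⊥)
    (hlsc : LowerSemicontinuous g₁)
    (hgrad : ∀ z, HasGradientAt g₂ (g₂' z) z)
    (hlip : LipschitzWith L.toNNReal g₂')
    (hconv : ConvexOn ℝ Set.univ h)
    (f : EuclideanSpace ℝ (Fin n) → EReal)
    (hf : ∀ z, f z = g₁ z + ((g₂ z : ℝ) : EReal) - ((h z : ℝ) : EReal))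
    (hbdd : (⨅ z, f z) ≠ ⊥)
    (x y : ℕ → EuclideanSpace ℝ (Fin n))
    (hdom : ∀ k, g₁ (x k) ≠ ⊤)
    (hy : ∀ k z, ⟪y k, z - x k⟫ ≤ h z - h (x k))
    (hmin : ∀ k z,
      g₁ (x (k+1)) - ((⟪y k - g₂' (x k), x (k+1) - x k⟫ : ℝ) : EReal)
        + ((t/2 * ‖x (k+1) - x k‖^2 : ℝ) : EReal)
      ≤ g₁ z - ((⟪y k - g₂' (x k), z - x k⟫ : ℝ) : EReal)
        + ((t/2 * ‖z - x k‖^2 : ℝ) : EReal)) :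
    (∀ m : ℕ,
      ((∑ k ∈ Finset.Icc 1 m, ‖x k - x (k+1)‖^2 : ℝ) : EReal)
        ≤ ((2/(t - L) : ℝ) : EReal) * (f (x 1) - ⨅ z, f z)) ∧
    Summable (fun k => ‖x k - x (k+1)‖^2) :=
  stmt_3_general g₁ g₂ h g₂' L t hL ht hnotbot hgrad hlip f hf hbdd x y hdom hy hmin
end

section
/- Suppose inf_{x∈ℝⁿ} f(x) > −∞. If a GPPA sequence {x^k} has a cluster point x* (i.e., some subsequence x^{k_ℓ} → x*), then lim_{k→+∞} f(x^k) = f(x*). Consequently, f takes the same value at all cluster points of {x^k}. -/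
/-!
Comparing the prox step with the previous iterate and combining the descent lemma for `g₂` with
the subgradient inequality for `h` gives sufficient decrease
`f(x^{k+1}) + (t - L)/2 ‖x^{k+1} - x^k‖² ≤ f(x^k)`; since `f` is bounded below, `f(x^k)` converges
to some `m` and the steps `x^{k+1} - x^k` vanish, so `x^{k_ℓ + 1} → x*` as well. Lower
semicontinuity of `g₁` gives `f(x*) ≤ m`. For the reverse inequality compare the prox step with
the competitor `x*`: the cross term `⟪y^k, x^{k+1} - x*⟫` is bounded above by the subgradient
inequality at `x^{k+1}` and at the reflected point `2x^k - x*`, and both bounds tend to `0` by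
continuity of `h`, so no bound on the subgradients `y^k` is needed.
-/

open scoped RealInnerProductSpace NNReal
open Filter Topology

theorem LowerSemicontinuousAt.le_of_tendsto {α β γ : Type*} [TopologicalSpace α]
    [LinearOrder γ] [TopologicalSpace γ] [OrderTopology γ] [DenselyOrdered γ]
    {g : α → γ} {x : α} (hg : LowerSemicontinuousAt g x) {l : Filter β} [l.NeBot] {u : β → α}
    {c : γ} (hu : Tendsto u l (𝓝 x)) (hgu : Tendsto (fun i => g (u i)) l (𝓝 c)) : g x ≤ c :=
  le_of_forall_lt_imp_le_of_dense fun _ hd =>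
    ge_of_tendsto hgu ((hu.eventually (hg _ hd)).mono fun _ => le_of_lt)

theorem tendsto_sub_succ_zero_of_sufficient_decrease {F : Type*} [NormedAddCommGroup F]
    {r : ℕ → ℝ} {u : ℕ → F} {c m : ℝ} (hc : 0 < c) (hr : Tendsto r atTop (𝓝 m))
    (hdec : ∀ k, r (k + 1) + c * ‖u (k + 1) - u k‖ ^ 2 ≤ r k) :
    Tendsto (fun k => u (k + 1) - u k) atTop (𝓝 0) := by
  have hgap : Tendsto (fun k => (r k - r (k + 1)) / c) atTop (𝓝 0) := by
    simpa using (hr.sub (hr.comp (tendsto_add_atTop_nat 1))).div_const c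
  have hsq : Tendsto (fun k => ‖u (k + 1) - u k‖ ^ 2) atTop (𝓝 0) :=
    squeeze_zero (fun _ => by positivity)
      (fun k => by rw [le_div_iff₀ hc]; linarith [hdec k]) hgap
  rw [tendsto_zero_iff_norm_tendsto_zero]
  simpa using hsq.sqrt

variable {E : Type*} [NormedAddCommGroup E] [InnerProductSpace ℝ E]

theorem le_add_inner_add_sq_of_lipschitzWith_gradient [CompleteSpace E] {g : E → ℝ} {g' : E → E}
    {K : ℝ≥0} (hg : ∀ z, HasGradientAt g (g' z) z) (hK : LipschitzWith K g') (a b : E) :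
    g b ≤ g a + ⟪g' a, b - a⟫ + K / 2 * ‖b - a‖ ^ 2 := by
  set v := b - a
  have hderiv : ∀ s : ℝ,
      HasDerivAt (fun s => g (a + s • v) - s * ⟪g' a, v⟫ - K / 2 * s ^ 2 * ‖v‖ ^ 2)
        (⟪g' (a + s • v) - g' a, v⟫ - K * s * ‖v‖ ^ 2) s := by
    intro s
    have hline : HasDerivAt (fun s : ℝ => a + s • v) v s :=
      ((hasDerivAt_id s).smul_const v).const_add a |>.congr_deriv (one_smul ℝ v)
    refine ((((hg _).hasFDerivAt.comp_hasDerivAt s hline).sub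
      ((hasDerivAt_id s).mul_const ⟪g' a, v⟫)).sub
      (((hasDerivAt_pow 2 s).const_mul (K / 2 : ℝ)).mul_const (‖v‖ ^ 2))).congr_deriv ?_
    simp only [InnerProductSpace.toDual_apply_apply, inner_sub_left, Nat.cast_ofNat]
    ring
  have hslope : ∀ s : ℝ, 0 ≤ s → ⟪g' (a + s • v) - g' a, v⟫ ≤ K * s * ‖v‖ ^ 2 := by
    intro s hs
    calc ⟪g' (a + s • v) - g' a, v⟫ ≤ ‖g' (a + s • v) - g' a‖ * ‖v‖ := real_inner_le_norm _ _
      _ ≤ K * ‖s • v‖ * ‖v‖ := by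
          gcongr
          simpa [dist_eq_norm] using hK.dist_le_mul (a + s • v) a
      _ = K * s * ‖v‖ ^ 2 := by rw [norm_smul, Real.norm_of_nonneg hs]; ring
  have := antitoneOn_of_hasDerivWithinAt_nonpos (convex_Icc (0 : ℝ) 1)
    (HasDerivAt.continuousOn fun s _ => hderiv s) (fun s _ => (hderiv s).hasDerivWithinAt)
    (fun s hs => sub_nonpos.2 (hslope s (interior_subset hs).1))
    (Set.left_mem_Icc.2 zero_le_one) (Set.right_mem_Icc.2 zero_le_one) zero_le_one
  simp only [zero_smul, add_zero, one_smul, zero_mul, sub_zero, one_pow, mul_one, one_mul, v,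
    add_sub_cancel] at this
  linarith

theorem prox_step_sufficient_decrease [CompleteSpace E] {g₂ h : E → ℝ} {g₂' : E → E} {K : ℝ≥0}
    (hgrad : ∀ z, HasGradientAt g₂ (g₂' z) z) (hlip : LipschitzWith K g₂') {t a₀ a₁ : ℝ}
    {x₀ x₁ y₀ : E} (hy : ⟪y₀, x₁ - x₀⟫ ≤ h x₁ - h x₀)
    (hprox : a₁ - ⟪y₀ - g₂' x₀, x₁ - x₀⟫ + t / 2 * ‖x₁ - x₀‖ ^ 2 ≤ a₀) :
    a₁ + g₂ x₁ - h x₁ + (t - K) / 2 * ‖x₁ - x₀‖ ^ 2 ≤ a₀ + g₂ x₀ - h x₀ := by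
  have hdescent := le_add_inner_add_sq_of_lipschitzWith_gradient hgrad hlip x₀ x₁
  rw [inner_sub_left] at hprox
  linarith

theorem le_of_prox_inequality {ι : Type*} {l : Filter ι} [l.NeBot] {h : E → ℝ} {G : E → E}
    (hh : Continuous h) (hG : Continuous G) {p q s : ι → E} {b : ι → ℝ} {x₀ : E} {t c β : ℝ}
    (hp : Tendsto p l (𝓝 x₀)) (hq : Tendsto q l (𝓝 x₀))
    (hs : ∀ i z, ⟪s i, z - p i⟫ ≤ h z - h (p i))
    (hb : ∀ i, b i - ⟪s i - G (p i), q i - p i⟫ + t / 2 * ‖q i - p i‖ ^ 2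
      ≤ c - ⟪s i - G (p i), x₀ - p i⟫ + t / 2 * ‖x₀ - p i‖ ^ 2)
    (hbβ : Tendsto b l (𝓝 β)) : β ≤ c := by
  set Φ : E × E → ℝ := fun w => c + (h w.2 - h w.1) + (h (w.1 + (w.1 - x₀)) - h w.1)
    - ⟪G w.1, w.2 - x₀⟫ + t / 2 * (‖x₀ - w.1‖ ^ 2 - ‖w.2 - w.1‖ ^ 2)
  have hΦ : Tendsto (fun i => Φ (p i, q i)) l (𝓝 c) := by
    have := ((by fun_prop : Continuous Φ).tendsto (x₀, x₀)).comp (hp.prodMk_nhds hq)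
    simpa [Φ, Function.comp_def] using this
  refine le_of_tendsto_of_tendsto' hbβ hΦ fun i => ?_
  have hbi := hb i
  have hnext := hs i (q i)
  have hreflect := hs i (p i + (p i - x₀))
  simp only [Φ, add_sub_cancel_left, inner_sub_left, inner_sub_right] at hbi hnext hreflect ⊢
  linarith

theorem exists_tendsto_value_of_prox_steps [CompleteSpace E] {g₂ h : E → ℝ} {g₂' : E → E}
    {K : ℝ≥0} {t : ℝ} (ht : K < t) (hgrad : ∀ z, HasGradientAt g₂ (g₂' z) z)
    (hlip : LipschitzWith K g₂') {x y : ℕ → E} {a : ℕ → ℝ}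
    (hy : ∀ k, ⟪y k, x (k + 1) - x k⟫ ≤ h (x (k + 1)) - h (x k))
    (hprox : ∀ k, a (k + 1) - ⟪y k - g₂' (x k), x (k + 1) - x k⟫
      + t / 2 * ‖x (k + 1) - x k‖ ^ 2 ≤ a k)
    (hbdd : BddBelow (Set.range fun k => a k + g₂ (x k) - h (x k))) :
    ∃ m, Tendsto (fun k => a k + g₂ (x k) - h (x k)) atTop (𝓝 m) ∧
      Tendsto (fun k => x (k + 1) - x k) atTop (𝓝 0) := by
  have hdec : ∀ k, a (k + 1) + g₂ (x (k + 1)) - h (x (k + 1))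
      + (t - K) / 2 * ‖x (k + 1) - x k‖ ^ 2 ≤ a k + g₂ (x k) - h (x k) := fun k =>
    prox_step_sufficient_decrease hgrad hlip (hy k) (hprox k)
  have hanti : Antitone fun k => a k + g₂ (x k) - h (x k) := antitone_nat_of_succ_le fun k => by
    nlinarith [hdec k, sq_nonneg ‖x (k + 1) - x k‖]
  have hm := tendsto_atTop_ciInf hanti hbdd
  exact ⟨_, hm, tendsto_sub_succ_zero_of_sufficient_decrease (by linarith) hm hdec⟩

theorem tendsto_gppa_objective [CompleteSpace E] {g₁ : E → EReal} {g₂ h : E → ℝ} {g₂' : E → E}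
    {K : ℝ≥0} {t : ℝ} (ht : K < t) (hnotbot : ∀ z, g₁ z ≠ ⊥)
    (hlsc : LowerSemicontinuous g₁) (hgrad : ∀ z, HasGradientAt g₂ (g₂' z) z)
    (hlip : LipschitzWith K g₂') (hh : Continuous h) {f : E → EReal}
    (hf : ∀ z, f z = g₁ z + ((g₂ z : ℝ) : EReal) - ((h z : ℝ) : EReal))
    (hbdd : (⨅ z, f z) ≠ ⊥) {x y : ℕ → E} (hdom : ∀ k, g₁ (x k) ≠ ⊤)
    (hy : ∀ k z, ⟪y k, z - x k⟫ ≤ h z - h (x k))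
    (hmin : ∀ k z,
      g₁ (x (k+1)) - ((⟪y k - g₂' (x k), x (k+1) - x k⟫ : ℝ) : EReal)
        + ((t/2 * ‖x (k+1) - x k‖^2 : ℝ) : EReal)
      ≤ g₁ z - ((⟪y k - g₂' (x k), z - x k⟫ : ℝ) : EReal)
        + ((t/2 * ‖z - x k‖^2 : ℝ) : EReal))
    {xstar : E}
    (hcluster : ∃ φ : ℕ → ℕ, StrictMono φ ∧ Tendsto (fun l => x (φ l)) atTop (𝓝 xstar)) :
    Tendsto (fun k => f (x k)) atTop (𝓝 (f xstar)) := by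
  obtain ⟨φ, hφ, hxφ⟩ := hcluster
  have hfin : ∀ z, g₁ z ≠ ⊤ → ((g₁ z).toReal : EReal) = g₁ z :=
    fun z hz => EReal.coe_toReal hz (hnotbot z)
  set a : ℕ → ℝ := fun k => (g₁ (x k)).toReal
  have hcoe : ∀ k, g₁ (x k) = a k := fun k => (hfin _ (hdom k)).symm
  set r : ℕ → ℝ := fun k => a k + g₂ (x k) - h (x k)
  have hfr : ∀ k, f (x k) = r k := fun k => by
    rw [hf, hcoe, ← EReal.coe_add, ← EReal.coe_sub]
  have hprox : ∀ k z (c : ℝ), g₁ z = c → a (k+1) - ⟪y k - g₂' (x k), x (k+1) - x k⟫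
      + t/2 * ‖x (k+1) - x k‖^2 ≤ c - ⟪y k - g₂' (x k), z - x k⟫ + t/2 * ‖z - x k‖^2 := by
    intro k z c hz
    have := hmin k z
    rw [hcoe, hz] at this
    exact_mod_cast this
  have hbelow : BddBelow (Set.range r) := by
    refine ⟨(⨅ z, f z).toReal, ?_⟩
    rintro _ ⟨k, rfl⟩
    simpa [hfr] using EReal.toReal_le_toReal (iInf_le f (x k)) hbdd (by simp [hfr])
  obtain ⟨m, hm, hstep⟩ := exists_tendsto_value_of_prox_steps ht hgrad hlip
    (fun k => hy k _) (fun k => by simpa using hprox k (x k) _ (hcoe k)) hbelow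
  have hxφ1 : Tendsto (fun l => x (φ l + 1)) atTop (𝓝 xstar) := by
    simpa using (hstep.comp hφ.tendsto_atTop).add hxφ
  have hg₂ : Continuous g₂ := continuous_iff_continuousAt.2 fun z => (hgrad z).continuousAt
  have ha : ∀ ψ : ℕ → ℕ, Tendsto ψ atTop atTop → Tendsto (fun l => x (ψ l)) atTop (𝓝 xstar) →
      Tendsto (fun l => a (ψ l)) atTop (𝓝 (m + h xstar - g₂ xstar)) := fun ψ hψ hxψ => by
    have := ((hm.comp hψ).add ((hh.tendsto xstar).comp hxψ)).sub ((hg₂.tendsto xstar).comp hxψ)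
    simpa [r] using this
  have hle : g₁ xstar ≤ ((m + h xstar - g₂ xstar : ℝ) : EReal) :=
    (hlsc.lowerSemicontinuousAt xstar).le_of_tendsto hxφ
      (by simpa only [hcoe] using EReal.tendsto_coe.2 (ha φ hφ.tendsto_atTop hxφ))
  obtain ⟨c, hc⟩ : ∃ c : ℝ, g₁ xstar = c :=
    ⟨_, (hfin _ (ne_top_of_le_ne_top (EReal.coe_ne_top _) hle)).symm⟩
  have hge : m + h xstar - g₂ xstar ≤ c := le_of_prox_inequality hh hlip.continuous hxφ hxφ1
    (fun l => hy (φ l)) (fun l => hprox (φ l) xstar c hc)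
    (ha (φ · + 1) (tendsto_add_atTop_nat 1 |>.comp hφ.tendsto_atTop) hxφ1)
  rw [hc, EReal.coe_le_coe_iff] at hle
  have hfstar : f xstar = m := by
    rw [hf, hc, ← EReal.coe_add, ← EReal.coe_sub]
    congr 1
    linarith
  simp only [hfstar, hfr]
  exact EReal.tendsto_coe.2 hm

theorem stmt_5_general {n : ℕ}
    (g₁ : EuclideanSpace ℝ (Fin n) → EReal)
    (g₂ h : EuclideanSpace ℝ (Fin n) → ℝ)
    (g₂' : EuclideanSpace ℝ (Fin n) → EuclideanSpace ℝ (Fin n))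
    (L t : ℝ) (hL : 0 ≤ L) (ht : L < t)
    (hnotbot : ∀ z, g₁ z ≠ ⊥)
    (hlsc : LowerSemicontinuous g₁)
    (hgrad : ∀ z, HasGradientAt g₂ (g₂' z) z)
    (hlip : LipschitzWith L.toNNReal g₂')
    (hconv : ConvexOn ℝ Set.univ h)
    (f : EuclideanSpace ℝ (Fin n) → EReal)
    (hf : ∀ z, f z = g₁ z + ((g₂ z : ℝ) : EReal) - ((h z : ℝ) : EReal))
    (hbdd : (⨅ z, f z) ≠ ⊥)
    (x y : ℕ → EuclideanSpace ℝ (Fin n))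
    (hdom : ∀ k, g₁ (x k) ≠ ⊤)
    (hy : ∀ k z, ⟪y k, z - x k⟫ ≤ h z - h (x k))
    (hmin : ∀ k z,
      g₁ (x (k+1)) - ((⟪y k - g₂' (x k), x (k+1) - x k⟫ : ℝ) : EReal)
        + ((t/2 * ‖x (k+1) - x k‖^2 : ℝ) : EReal)
      ≤ g₁ z - ((⟪y k - g₂' (x k), z - x k⟫ : ℝ) : EReal)
        + ((t/2 * ‖z - x k‖^2 : ℝ) : EReal))
    (xstar : EuclideanSpace ℝ (Fin n))
    (hcluster : ∃ φ : ℕ → ℕ, StrictMono φ ∧ Tendsto (fun l => x (φ l)) atTop (𝓝 xstar)) :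
    Tendsto (fun k => f (x k)) atTop (𝓝 (f xstar)) ∧
    (∀ x₁ x₂ : EuclideanSpace ℝ (Fin n),
      (∃ φ : ℕ → ℕ, StrictMono φ ∧ Tendsto (fun l => x (φ l)) atTop (𝓝 x₁)) →
      (∃ ψ : ℕ → ℕ, StrictMono ψ ∧ Tendsto (fun l => x (ψ l)) atTop (𝓝 x₂)) →
      f x₁ = f x₂) := by
  have key := fun x₀ hx₀ => tendsto_gppa_objective (xstar := x₀)
    (by rwa [Real.coe_toNNReal L hL]) hnotbot hlsc hgrad hlip
    hconv.locallyLipschitz.continuous hf hbdd hdom hy hmin hx₀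
  exact ⟨key xstar hcluster, fun x₁ x₂ h₁ h₂ => tendsto_nhds_unique (key x₁ h₁) (key x₂ h₂)⟩

/-- If `inf f > −∞` and the GPPA sequence has a cluster point `x*`, then
`f(x^k) → f(x*)`; consequently `f` has the same value at all cluster points. -/
theorem stmt_5 {n : ℕ}
    (g₁ : EuclideanSpace ℝ (Fin n) → EReal)
    (g₂ h : EuclideanSpace ℝ (Fin n) → ℝ)
    (g₂' : EuclideanSpace ℝ (Fin n) → EuclideanSpace ℝ (Fin n))
    (L t : ℝ) (hL : 0 ≤ L) (ht : L < t)
    (hproper : ∃ z, g₁ z ≠ ⊤) (hnotbot : ∀ z, g₁ z ≠ ⊥)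
    (hlsc : LowerSemicontinuous g₁)
    (hgrad : ∀ z, HasGradientAt g₂ (g₂' z) z)
    (hlip : LipschitzWith L.toNNReal g₂')
    (hconv : ConvexOn ℝ Set.univ h)
    (f : EuclideanSpace ℝ (Fin n) → EReal)
    (hf : ∀ z, f z = g₁ z + ((g₂ z : ℝ) : EReal) - ((h z : ℝ) : EReal))
    (hbdd : (⨅ z, f z) ≠ ⊥)
    (x y : ℕ → EuclideanSpace ℝ (Fin n))
    (hdom : ∀ k, g₁ (x k) ≠ ⊤)
    (hy : ∀ k z, ⟪y k, z - x k⟫ ≤ h z - h (x k))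
    (hmin : ∀ k z,
      g₁ (x (k+1)) - ((⟪y k - g₂' (x k), x (k+1) - x k⟫ : ℝ) : EReal)
        + ((t/2 * ‖x (k+1) - x k‖^2 : ℝ) : EReal)
      ≤ g₁ z - ((⟪y k - g₂' (x k), z - x k⟫ : ℝ) : EReal)
        + ((t/2 * ‖z - x k‖^2 : ℝ) : EReal))
    (xstar : EuclideanSpace ℝ (Fin n))
    (hcluster : ∃ φ : ℕ → ℕ, StrictMono φ ∧ Tendsto (fun l => x (φ l)) atTop (𝓝 xstar)) :
    Tendsto (fun k => f (x k)) atTop (𝓝 (f xstar)) ∧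
    (∀ x₁ x₂ : EuclideanSpace ℝ (Fin n),
      (∃ φ : ℕ → ℕ, StrictMono φ ∧ Tendsto (fun l => x (φ l)) atTop (𝓝 x₁)) →
      (∃ ψ : ℕ → ℕ, StrictMono ψ ∧ Tendsto (fun l => x (ψ l)) atTop (𝓝 x₂)) →
      f x₁ = f x₂) :=
  stmt_5_general g₁ g₂ h g₂' L t hL ht hnotbot hlsc hgrad hlip hconv f hf hbdd x y hdom hy hmin
    xstar hcluster
end

section
/- Suppose in addition that g₁ is convex and that the stepsize satisfies only t > L/2 (instead of t > L). Then for any GPPA sequence {x^k} and every k ≥ 1 the stronger descent inequality holds: f(x^k) − f(x^{k+1}) ≥ (t − L/2)·‖x^k − x^{k+1}‖². -/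
/-!
The proximal objective `z ↦ g₁ z - ⟪y^k - ∇g₂(x^k), z - x^k⟫ + t/2 ‖z - x^k‖²` is `t`-strongly
convex on the effective domain of `g₁`, so comparing its minimum `x^{k+1}` with `x^k` gains an
extra `t/2 ‖x^{k+1} - x^k‖²` over mere minimality, which is what lets `t > L/2` replace `t > L`.
Adding the descent lemma for `g₂` (an `L/2 ‖·‖²` loss) and the subgradient inequality for `h`
gives the claim.
-/

open scoped RealInnerProductSpace NNReal
open Set Filter Topology

variable {E : Type*} [NormedAddCommGroup E] [InnerProductSpace ℝ E]

theorem le_add_inner_add_of_lipschitzWith_gradient_s6 [CompleteSpace E] {f : E → ℝ} {f' : E → E}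
    {K : ℝ≥0} (hf : ∀ z, HasGradientAt f (f' z) z) (hf' : LipschitzWith K f') (x y : E) :
    f y ≤ f x + ⟪f' x, y - x⟫ + K / 2 * ‖y - x‖ ^ 2 := by
  set d := y - x
  let F : ℝ → ℝ := fun s ↦ f (x + s • d) - s * ⟪f' x, d⟫ - K / 2 * s ^ 2 * ‖d‖ ^ 2
  have hF : ∀ s, HasDerivAt F (⟪f' (x + s • d) - f' x, d⟫ - K * s * ‖d‖ ^ 2) s := by
    intro s
    have hline : HasDerivAt (fun s : ℝ ↦ x + s • d) d s := by
      simpa using ((hasDerivAt_id s).smul_const d).const_add x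
    have hfline := (hf (x + s • d)).hasFDerivAt.comp_hasDerivAt s hline
    simp only [Function.comp_def, InnerProductSpace.toDual_apply_apply] at hfline
    refine ((hfline.sub ((hasDerivAt_id s).mul_const ⟪f' x, d⟫)).sub
      (((hasDerivAt_pow 2 s).const_mul (K / 2 : ℝ)).mul_const (‖d‖ ^ 2))).congr_deriv ?_
    rw [inner_sub_left]
    ring
  have hslope : ∀ s ∈ interior (Icc (0 : ℝ) 1),
      ⟪f' (x + s • d) - f' x, d⟫ - K * s * ‖d‖ ^ 2 ≤ 0 := by
    intro s hs
    rw [interior_Icc] at hs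
    rw [sub_nonpos]
    calc ⟪f' (x + s • d) - f' x, d⟫ ≤ ‖f' (x + s • d) - f' x‖ * ‖d‖ := real_inner_le_norm _ _
      _ ≤ K * ‖s • d‖ * ‖d‖ := by
        gcongr
        simpa [dist_eq_norm] using hf'.dist_le_mul (x + s • d) x
      _ = K * s * ‖d‖ ^ 2 := by rw [norm_smul, Real.norm_of_nonneg hs.1.le]; ring
  have hanti : AntitoneOn F (Icc 0 1) :=
    antitoneOn_of_hasDerivWithinAt_nonpos (convex_Icc 0 1)
      (fun s _ ↦ (hF s).continuousAt.continuousWithinAt) (fun s _ ↦ (hF s).hasDerivWithinAt) hslope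
  have hends := hanti (left_mem_Icc.2 zero_le_one) (right_mem_Icc.2 zero_le_one) zero_le_one
  simp only [one_smul, add_sub_cancel, one_mul, one_pow, mul_one, zero_smul, add_zero, zero_mul,
    sub_zero, ne_eq, OfNat.ofNat_ne_zero, not_false_eq_true, zero_pow, mul_zero, tsub_le_iff_right,
    F, d] at hends
  linarith

theorem StrongConvexOn.add_le_of_isMinOn {s : Set E} {m : ℝ} {f : E → ℝ} {a b : E}
    (hf : StrongConvexOn s m f) (hmin : IsMinOn f s a) (ha : a ∈ s) (hb : b ∈ s) :
    f a + m / 2 * ‖a - b‖ ^ 2 ≤ f b := by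
  have hθ : ∀ θ ∈ Ioo (0 : ℝ) 1, f a + (1 - θ) * (m / 2 * ‖a - b‖ ^ 2) ≤ f b := by
    rintro θ ⟨hθ₀, hθ₁⟩
    have hconv := hf.2 hb ha hθ₀.le (sub_nonneg.2 hθ₁.le) (add_sub_cancel θ 1)
    have hle := hmin (hf.1 hb ha hθ₀.le (sub_nonneg.2 hθ₁.le) (add_sub_cancel θ 1))
    rw [smul_eq_mul, smul_eq_mul, norm_sub_rev] at hconv
    refine le_of_mul_le_mul_left ?_ hθ₀
    nlinarith [hle.trans hconv]
  have hlim : Tendsto (fun θ : ℝ ↦ f a + (1 - θ) * (m / 2 * ‖a - b‖ ^ 2)) (𝓝[>] 0)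
      (𝓝 (f a + m / 2 * ‖a - b‖ ^ 2)) := by
    have hcont : Continuous fun θ : ℝ ↦ f a + (1 - θ) * (m / 2 * ‖a - b‖ ^ 2) := by fun_prop
    simpa using (hcont.tendsto 0).mono_left nhdsWithin_le_nhds
  exact le_of_tendsto hlim (eventually_of_mem (Ioo_mem_nhdsGT one_pos) hθ)

theorem convexOn_toReal_setOf_ne_top {g : E → EReal}
    (hg : ∀ u v : E, ∀ a b : ℝ, 0 ≤ a → 0 ≤ b → a + b = 1 →
      g (a • u + b • v) ≤ ((a : ℝ) : EReal) * g u + ((b : ℝ) : EReal) * g v)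
    (hbot : ∀ z, g z ≠ ⊥) : ConvexOn ℝ {z | g z ≠ ⊤} fun z ↦ (g z).toReal := by
  have hle : ∀ u, g u ≠ ⊤ → ∀ v, g v ≠ ⊤ → ∀ a b : ℝ, 0 ≤ a → 0 ≤ b → a + b = 1 →
      g (a • u + b • v) ≤ ((a * (g u).toReal + b * (g v).toReal : ℝ) : EReal) := by
    intro u hu v hv a b ha hb hab
    rw [EReal.coe_add, EReal.coe_mul, EReal.coe_mul, EReal.coe_toReal hu (hbot u),
      EReal.coe_toReal hv (hbot v)]
    exact hg u v a b ha hb hab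
  refine ⟨fun u hu v hv a b ha hb hab ↦ ne_top_of_le_ne_top (EReal.coe_ne_top _)
    (hle u hu v hv a b ha hb hab), fun u hu v hv a b ha hb hab ↦ ?_⟩
  exact (EReal.toReal_le_toReal (hle u hu v hv a b ha hb hab) (hbot _)
    (EReal.coe_ne_top _)).trans_eq (EReal.toReal_coe _)

theorem ConvexOn.strongConvexOn_sub_inner_add_sq_norm_sub {s : Set E} {ψ : E → ℝ}
    (hψ : ConvexOn ℝ s ψ) (t : ℝ) (c x : E) :
    StrongConvexOn s t fun z ↦ ψ z - ⟪c, z - x⟫ + t / 2 * ‖z - x‖ ^ 2 := by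
  rw [strongConvexOn_iff_convex]
  have haffine : ∀ z, ψ z - ⟪c, z - x⟫ + t / 2 * ‖z - x‖ ^ 2 - t / 2 * ‖z‖ ^ 2
      = ψ z + (innerₗ E (-(c + t • x)) z + (⟪c, x⟫ + t / 2 * ‖x‖ ^ 2)) := by
    intro z
    rw [innerₗ_apply_apply, norm_sub_sq_real, inner_sub_right, inner_neg_left, inner_add_left,
      real_inner_smul_left, real_inner_comm x z]
    ring
  simp_rw [haffine]
  exact hψ.add (((innerₗ E _).convexOn hψ.1).add_const _)

theorem toReal_sub_inner_add_mul_sq_le_of_forall_le {g : E → EReal}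
    (hg : ∀ u v : E, ∀ a b : ℝ, 0 ≤ a → 0 ≤ b → a + b = 1 →
      g (a • u + b • v) ≤ ((a : ℝ) : EReal) * g u + ((b : ℝ) : EReal) * g v)
    (hbot : ∀ z, g z ≠ ⊥) {t : ℝ} {c x x' : E}
    (hmin : ∀ z, g x' - ((⟪c, x' - x⟫ : ℝ) : EReal) + ((t / 2 * ‖x' - x‖ ^ 2 : ℝ) : EReal)
      ≤ g z - ((⟪c, z - x⟫ : ℝ) : EReal) + ((t / 2 * ‖z - x‖ ^ 2 : ℝ) : EReal))
    (hx : g x ≠ ⊤) (hx' : g x' ≠ ⊤) :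
    (g x').toReal - ⟪c, x' - x⟫ + t * ‖x' - x‖ ^ 2 ≤ (g x).toReal := by
  have hminOn : IsMinOn (fun z ↦ (g z).toReal - ⟪c, z - x⟫ + t / 2 * ‖z - x‖ ^ 2)
      {z | g z ≠ ⊤} x' := fun z hz ↦ by
    have h := hmin z
    rw [← EReal.coe_toReal hz (hbot z), ← EReal.coe_toReal hx' (hbot x')] at h
    exact_mod_cast h
  have h := ((convexOn_toReal_setOf_ne_top hg hbot).strongConvexOn_sub_inner_add_sq_norm_sub
    t c x).add_le_of_isMinOn hminOn hx' hx
  simp only [sub_self, inner_zero_right, norm_zero] at h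
  linarith

theorem stmt_6_general {n : ℕ}
    (g₁ : EuclideanSpace ℝ (Fin n) → EReal)
    (g₂ h : EuclideanSpace ℝ (Fin n) → ℝ)
    (g₂' : EuclideanSpace ℝ (Fin n) → EuclideanSpace ℝ (Fin n))
    (L t : ℝ) (hL : 0 ≤ L)
    (hnotbot : ∀ z, g₁ z ≠ ⊥)
    (hg₁conv : ∀ u v : EuclideanSpace ℝ (Fin n), ∀ a b : ℝ, 0 ≤ a → 0 ≤ b → a + b = 1 →
      g₁ (a • u + b • v) ≤ ((a : ℝ) : EReal) * g₁ u + ((b : ℝ) : EReal) * g₁ v)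
    (hgrad : ∀ z, HasGradientAt g₂ (g₂' z) z)
    (hlip : LipschitzWith L.toNNReal g₂')
    (x y : ℕ → EuclideanSpace ℝ (Fin n))
    (hdom : ∀ k, g₁ (x k) ≠ ⊤)
    (hy : ∀ k z, ⟪y k, z - x k⟫ ≤ h z - h (x k))
    (hmin : ∀ k z,
      g₁ (x (k+1)) - ((⟪y k - g₂' (x k), x (k+1) - x k⟫ : ℝ) : EReal)
        + ((t/2 * ‖x (k+1) - x k‖^2 : ℝ) : EReal)
      ≤ g₁ z - ((⟪y k - g₂' (x k), z - x k⟫ : ℝ) : EReal)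
        + ((t/2 * ‖z - x k‖^2 : ℝ) : EReal)) :
    ∀ k ≥ 1,
      (((t - L/2) * ‖x k - x (k+1)‖^2 : ℝ) : EReal)
        ≤ (g₁ (x k) + ((g₂ (x k) : ℝ) : EReal) - ((h (x k) : ℝ) : EReal))
          - (g₁ (x (k+1)) + ((g₂ (x (k+1)) : ℝ) : EReal) - ((h (x (k+1)) : ℝ) : EReal)) := by
  intro k _
  have hprox := toReal_sub_inner_add_mul_sq_le_of_forall_le hg₁conv hnotbot (hmin k) (hdom k)
    (hdom (k + 1))
  have hdescent := le_add_inner_add_of_lipschitzWith_gradient_s6 hgrad hlip (x k) (x (k + 1))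
  have hsubgrad := hy k (x (k + 1))
  rw [Real.coe_toNNReal L hL] at hdescent
  rw [inner_sub_left] at hprox
  rw [← EReal.coe_toReal (hdom k) (hnotbot _), ← EReal.coe_toReal (hdom (k + 1)) (hnotbot _),
    norm_sub_rev]
  norm_cast
  linarith

/-- If in addition `g₁` is convex and only `t > L/2` is assumed, then the stronger
descent inequality `f(x^k) − f(x^{k+1}) ≥ (t − L/2)·‖x^k − x^{k+1}‖²` holds for `k ≥ 1`. -/
theorem stmt_6 {n : ℕ}
    (g₁ : EuclideanSpace ℝ (Fin n) → EReal)
    (g₂ h : EuclideanSpace ℝ (Fin n) → ℝ)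
    (g₂' : EuclideanSpace ℝ (Fin n) → EuclideanSpace ℝ (Fin n))
    (L t : ℝ) (hL : 0 ≤ L) (ht : L/2 < t)
    (hproper : ∃ z, g₁ z ≠ ⊤) (hnotbot : ∀ z, g₁ z ≠ ⊥)
    (hlsc : LowerSemicontinuous g₁)
    (hg₁conv : ∀ u v : EuclideanSpace ℝ (Fin n), ∀ a b : ℝ, 0 ≤ a → 0 ≤ b → a + b = 1 →
      g₁ (a • u + b • v) ≤ ((a : ℝ) : EReal) * g₁ u + ((b : ℝ) : EReal) * g₁ v)
    (hgrad : ∀ z, HasGradientAt g₂ (g₂' z) z)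
    (hlip : LipschitzWith L.toNNReal g₂')
    (hconv : ConvexOn ℝ Set.univ h)
    (x y : ℕ → EuclideanSpace ℝ (Fin n))
    (hdom : ∀ k, g₁ (x k) ≠ ⊤)
    (hy : ∀ k z, ⟪y k, z - x k⟫ ≤ h z - h (x k))
    (hmin : ∀ k z,
      g₁ (x (k+1)) - ((⟪y k - g₂' (x k), x (k+1) - x k⟫ : ℝ) : EReal)
        + ((t/2 * ‖x (k+1) - x k‖^2 : ℝ) : EReal)
      ≤ g₁ z - ((⟪y k - g₂' (x k), z - x k⟫ : ℝ) : EReal)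
        + ((t/2 * ‖z - x k‖^2 : ℝ) : EReal)) :
    ∀ k ≥ 1,
      (((t - L/2) * ‖x k - x (k+1)‖^2 : ℝ) : EReal)
        ≤ (g₁ (x k) + ((g₂ (x k) : ℝ) : EReal) - ((h (x k) : ℝ) : EReal))
          - (g₁ (x (k+1)) + ((g₂ (x (k+1)) : ℝ) : EReal) - ((h (x (k+1)) : ℝ) : EReal)) :=
  stmt_6_general g₁ g₂ h g₂' L t hL hnotbot hg₁conv hgrad hlip x y hdom hy hmin
end

section
/- Let {x^k} be a sequence in ℝⁿ, let {b_k} be a sequence of nonnegative real numbers, let γ > 0, and let N ∈ ℕ, N ≥ 1, be such that for every k ≥ N: ‖x^{k+1} − x^k‖ ≤ (1/4)‖x^k − x^{k−1}‖ + γ·(b_k − b_{k+1}). Then Σ_{k=1}^{∞} ‖x^{k+1} − x^k‖ < +∞; in particular {x^k} is a Cauchy sequence and hence converges. Moreover, for every k ≥ 1, Σ_{j=1}^{k} ‖x^{N+j} − x^{N+j−1}‖ ≤ (4/3)·[ ‖x^{N−1} − x^N‖/4 + γ·b_N ]. -/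
/-!
With `dₖ = ‖xᵏ - xᵏ⁻¹‖` and `βₖ = γ bₖ ≥ 0`, the hypothesis reads `dₖ₊₁ ≤ ¼ dₖ + βₖ - βₖ₊₁`.
Summing it from `N` on, the `β` terms telescope and the `d` terms reappear on the right with
weight `¼`, so the partial sums `S` of `dₖ₊₁` satisfy `¾ S ≤ ¼ d_N + β_N`. Bounded partial sums
of a nonnegative series give summability, and summable step lengths make `{xᵏ}` Cauchy.
-/

open Filter Topology Finset

section Contraction

variable {ρ : ℝ} {a β : ℕ → ℝ}

theorem one_sub_mul_sum_Icc_add_mul_le (h : ∀ k, a (k + 1) ≤ ρ * a k + (β k - β (k + 1)))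
    (m : ℕ) : (1 - ρ) * ∑ i ∈ Icc 1 m, a i + ρ * a m ≤ ρ * a 0 + β 0 - β m := by
  induction m with
  | zero => simp
  | succ m ih =>
    rw [sum_Icc_succ_top (by omega)]
    linarith [h m]

theorem sum_Icc_le_of_le_mul_add_sub (hρ₀ : 0 ≤ ρ) (hρ₁ : ρ < 1) (ha : ∀ k, 0 ≤ a k)
    (hβ : ∀ k, 0 ≤ β k) (h : ∀ k, a (k + 1) ≤ ρ * a k + (β k - β (k + 1))) (m : ℕ) :
    ∑ i ∈ Icc 1 m, a i ≤ (1 - ρ)⁻¹ * (ρ * a 0 + β 0) := by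
  rw [le_inv_mul_iff₀ (sub_pos.mpr hρ₁)]
  linarith [one_sub_mul_sum_Icc_add_mul_le h m, mul_nonneg hρ₀ (ha m), hβ m]

theorem summable_of_le_mul_add_sub (hρ₀ : 0 ≤ ρ) (hρ₁ : ρ < 1) (ha : ∀ k, 0 ≤ a k)
    (hβ : ∀ k, 0 ≤ β k) (h : ∀ k, a (k + 1) ≤ ρ * a k + (β k - β (k + 1))) : Summable a := by
  refine (summable_nat_add_iff 1).mp <|
    summable_of_sum_range_le (c := (1 - ρ)⁻¹ * (ρ * a 0 + β 0)) (fun k ↦ ha (k + 1)) fun m ↦ ?_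
  rw [range_eq_Ico, sum_Ico_add', Ico_add_one_right_eq_Icc]
  exact sum_Icc_le_of_le_mul_add_sub hρ₀ hρ₁ ha hβ h m

end Contraction

theorem stmt_9_general {n : ℕ}
    (x : ℕ → EuclideanSpace ℝ (Fin n))
    (b : ℕ → ℝ) (hb : ∀ k, 0 ≤ b k)
    (γ : ℝ) (hγ : 0 < γ)
    (N : ℕ)
    (hrec : ∀ k ≥ N, ‖x (k+1) - x k‖ ≤ (1/4) * ‖x k - x (k-1)‖ + γ * (b k - b (k+1))) :
    Summable (fun k => ‖x (k+1) - x k‖) ∧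
    CauchySeq x ∧
    (∃ xstar, Tendsto x atTop (𝓝 xstar)) ∧
    (∀ k ≥ 1, ∑ j ∈ Finset.Icc 1 k, ‖x (N+j) - x (N+j-1)‖
        ≤ (4/3) * (‖x (N-1) - x N‖/4 + γ * b N)) := by
  let d : ℕ → ℝ := fun k ↦ ‖x k - x (k - 1)‖
  have hd : ∀ k, 0 ≤ d (N + k) := fun k ↦ norm_nonneg _
  have hβ : ∀ k, 0 ≤ γ * b (N + k) := fun k ↦ mul_nonneg hγ.le (hb _)
  have hstep : ∀ k, d (N + k + 1) ≤ 1 / 4 * d (N + k) + (γ * b (N + k) - γ * b (N + k + 1)) :=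
    fun k ↦ by
      simpa only [d, ← mul_sub, Nat.add_sub_cancel] using hrec (N + k) (Nat.le_add_right N k)
  have hsum : Summable fun k ↦ ‖x (k + 1) - x k‖ := by
    have hd_summable := summable_of_le_mul_add_sub (by norm_num) (by norm_num) hd hβ hstep
    refine (summable_nat_add_iff N).mp ?_
    simpa only [d, add_comm _ N, ← add_assoc, Nat.add_sub_cancel] using
      (summable_nat_add_iff 1).mpr hd_summable
  have hcauchy : CauchySeq x :=
    cauchySeq_of_summable_dist <| by simpa only [dist_eq_norm', Nat.succ_eq_add_one] using hsum
  refine ⟨hsum, hcauchy, cauchySeq_tendsto_of_complete hcauchy, fun k _ ↦ ?_⟩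
  have hbound := sum_Icc_le_of_le_mul_add_sub (by norm_num) (by norm_num) hd hβ hstep k
  rw [norm_sub_rev]
  norm_num at hbound ⊢
  linarith

/-- Key summability estimate: if for all `k ≥ N`,
`‖x^{k+1} − x^k‖ ≤ (1/4)‖x^k − x^{k−1}‖ + γ(b_k − b_{k+1})` with `b_k ≥ 0`, then
`Σ ‖x^{k+1} − x^k‖ < ∞`, `{x^k}` is Cauchy and converges, and for every `k ≥ 1`,
`Σ_{j=1}^{k} ‖x^{N+j} − x^{N+j−1}‖ ≤ (4/3)(‖x^{N−1} − x^N‖/4 + γ b_N)`. -/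
theorem stmt_9 {n : ℕ}
    (x : ℕ → EuclideanSpace ℝ (Fin n))
    (b : ℕ → ℝ) (hb : ∀ k, 0 ≤ b k)
    (γ : ℝ) (hγ : 0 < γ)
    (N : ℕ) (hN : 1 ≤ N)
    (hrec : ∀ k ≥ N, ‖x (k+1) - x k‖ ≤ (1/4) * ‖x k - x (k-1)‖ + γ * (b k - b (k+1))) :
    Summable (fun k => ‖x (k+1) - x k‖) ∧
    CauchySeq x ∧
    (∃ xstar, Tendsto x atTop (𝓝 xstar)) ∧
    (∀ k ≥ 1, ∑ j ∈ Finset.Icc 1 k, ‖x (N+j) - x (N+j-1)‖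
        ≤ (4/3) * (‖x (N-1) - x N‖/4 + γ * b N)) :=
  stmt_9_general x b hb γ hγ N hrec
end

section
/- Let B be a nonempty closed subset of ℝⁿ and let x̄ ∈ ℝⁿ. Then the subdifferential of the convex function h_B at x̄ equals the convex hull of the projection set: {v ∈ ℝⁿ : ⟨v, x − x̄⟩ ≤ h_B(x) − h_B(x̄) for all x ∈ ℝⁿ} = conv P_B(x̄), where P_B(x̄) = {y ∈ B : ‖x̄ − y‖ = dist(x̄, B)} is nonempty and compact (so its convex hull is compact, hence closed). -/
/-!
`h_B(x) = sup_{y ∈ B} (⟪x, y⟫ - ‖y‖²/2)`, and the supremum is attained exactly at the nearest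
points of `B` to `x`. Hence every `y ∈ P_B(x̄)` is a subgradient of `h_B` at `x̄`, and so is every
convex combination of them. Conversely, comparing `h_B` along `x̄ + t • d` with nearest points to
`x̄ + t • d` and letting `t → 0` (by compactness) shows that a subgradient `v` satisfies
`⟪v, d⟫ ≤ max_{y ∈ P_B(x̄)} ⟪d, y⟫` for every direction `d`; so `v` lies in every closed half-space
containing the compact convex set `conv P_B(x̄)`, hence in that set.
-/

open Metric Set
open scoped RealInnerProductSpace

section ConvexHull

variable {E : Type*} [NormedAddCommGroup E] [NormedSpace ℝ E] {s : Set E}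

lemma exists_stdSimplex_sum_smul_eq_of_card_le {ι κ : Type*} [Fintype ι] [Fintype κ]
    (hcard : Fintype.card ι ≤ Fintype.card κ) {y₀ : E} (hy₀ : y₀ ∈ s) {w : ι → ℝ} {z : ι → E}
    (hw : w ∈ stdSimplex ℝ ι) (hz : ∀ i, z i ∈ s) :
    ∃ W ∈ stdSimplex ℝ κ, ∃ Z : κ → E, (∀ j, Z j ∈ s) ∧ ∑ j, W j • Z j = ∑ i, w i • z i := by
  let σ : ι ⊕ Fin (Fintype.card κ - Fintype.card ι) ≃ κ :=
    Fintype.equivOfCardEq (by simp; omega)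
  refine ⟨Sum.elim w 0 ∘ σ.symm, ⟨fun j => ?_, ?_⟩, Sum.elim z (fun _ => y₀) ∘ σ.symm,
    fun j => ?_, ?_⟩
  · exact Sum.forall (p := fun a => 0 ≤ Sum.elim w 0 a) |>.2
      ⟨hw.1, fun _ => le_rfl⟩ _
  · simp [σ.symm.sum_comp (Sum.elim w 0), Fintype.sum_sum_type, hw.2]
  · exact Sum.forall (p := fun a => Sum.elim z (fun _ => y₀) a ∈ s) |>.2
      ⟨hz, fun _ => hy₀⟩ _
  · simp [σ.symm.sum_comp (fun a => Sum.elim w 0 a • Sum.elim z (fun _ => y₀) a),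
      Fintype.sum_sum_type]

/-- Carathéodory's theorem, with all convex combinations padded to `finrank + 1` points. -/
lemma convexHull_eq_image_stdSimplex_prod [FiniteDimensional ℝ E] (hs : s.Nonempty) :
    convexHull ℝ s =
      (fun p : (Fin (Module.finrank ℝ E + 1) → ℝ) × (Fin (Module.finrank ℝ E + 1) → E) =>
        ∑ i, p.1 i • p.2 i) '' (stdSimplex ℝ _ ×ˢ univ.pi fun _ => s) := by
  refine Subset.antisymm (fun x hx => ?_) ?_
  · obtain ⟨ι, _, z, w, hzs, hz, hw0, hw1, rfl⟩ := eq_pos_convex_span_of_mem_convexHull hx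
    have hcard : Fintype.card ι ≤ Fintype.card (Fin (Module.finrank ℝ E + 1)) := by
      simpa using hz.card_le_finrank_succ.trans
        (Nat.succ_le_succ (Submodule.finrank_le _))
    obtain ⟨W, hW, Z, hZ, hsum⟩ := exists_stdSimplex_sum_smul_eq_of_card_le hcard hs.some_mem
      ⟨fun i => (hw0 i).le, hw1⟩ fun i => hzs (mem_range_self i)
    exact ⟨(W, Z), ⟨hW, fun j _ => hZ j⟩, hsum⟩
  · rintro x ⟨⟨w, z⟩, ⟨hw, hz⟩, rfl⟩
    exact (convex_convexHull ℝ s).sum_mem (fun i _ => hw.1 i) hw.2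
      fun i _ => subset_convexHull ℝ s (hz i (mem_univ i))

lemma IsCompact.convexHull [FiniteDimensional ℝ E] (hs : IsCompact s) :
    IsCompact (convexHull ℝ s) := by
  rcases s.eq_empty_or_nonempty with rfl | hne
  · simp
  rw [convexHull_eq_image_stdSimplex_prod hne]
  exact ((isCompact_stdSimplex ℝ _).prod (isCompact_univ_pi fun _ => hs)).image <| by fun_prop

end ConvexHull

section ProjSet

variable {E : Type*} [NormedAddCommGroup E] {B : Set E}

/-- `P_B(x)` in the paper. -/
def projSet (B : Set E) (x : E) : Set E := {y ∈ B | ‖x - y‖ = infDist x B}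

lemma isClosed_projSet (hB : IsClosed B) (x : E) : IsClosed (projSet B x) :=
  hB.inter (isClosed_eq (by fun_prop) continuous_const)

lemma projSet_subset_closedBall (B : Set E) (x : E) :
    projSet B x ⊆ closedBall x (infDist x B) := fun y hy => by
  rw [mem_closedBall, dist_comm, dist_eq_norm, hy.2]

lemma isCompact_projSet [ProperSpace E] (hB : IsClosed B) (x : E) :
    IsCompact (projSet B x) :=
  (isCompact_closedBall x _).of_isClosed_subset (isClosed_projSet hB x)
    (projSet_subset_closedBall B x)

lemma projSet_nonempty [ProperSpace E] (hB : IsClosed B) (hne : B.Nonempty) (x : E) :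
    (projSet B x).Nonempty := by
  obtain ⟨y, hy, hxy⟩ := hB.exists_infDist_eq_dist hne x
  exact ⟨y, hy, by rw [hxy, dist_eq_norm]⟩

lemma norm_sub_le_of_mem_projSet {x' y : E} (hy : y ∈ projSet B x') (x : E) :
    ‖x - y‖ ≤ infDist x B + 2 * ‖x - x'‖ := by
  calc ‖x - y‖ ≤ ‖x - x'‖ + ‖x' - y‖ := norm_sub_le_norm_sub_add_norm_sub ..
  _ = ‖x - x'‖ + infDist x' B := by rw [hy.2]
  _ ≤ ‖x - x'‖ + (infDist x B + ‖x - x'‖) := by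
      gcongr
      rw [← dist_eq_norm, dist_comm]
      exact infDist_le_infDist_add_dist
  _ = infDist x B + 2 * ‖x - x'‖ := by ring

end ProjSet

section Subgradients

variable {E : Type*} [NormedAddCommGroup E] [InnerProductSpace ℝ E]

def subgradients (f : E → ℝ) (x : E) : Set E := {v | ∀ y, ⟪v, y - x⟫ ≤ f y - f x}

lemma convex_subgradients (f : E → ℝ) (x : E) : Convex ℝ (subgradients f x) := by
  intro v₁ hv₁ v₂ hv₂ a b ha hb hab y
  calc ⟪a • v₁ + b • v₂, y - x⟫ = a * ⟪v₁, y - x⟫ + b * ⟪v₂, y - x⟫ := by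
        rw [inner_add_left, real_inner_smul_left, real_inner_smul_left]
  _ ≤ a * (f y - f x) + b * (f y - f x) := by gcongr; exacts [hv₁ y, hv₂ y]
  _ = f y - f x := by rw [← add_mul, hab, one_mul]

/-- `h_B` in the paper. -/
noncomputable def projPotential (B : Set E) (x : E) : ℝ := ‖x‖ ^ 2 / 2 - infDist x B ^ 2 / 2

variable {B : Set E} {x y v : E}

lemma inner_sub_half_sq_le_projPotential (hy : y ∈ B) (x : E) :
    ⟪x, y⟫ - ‖y‖ ^ 2 / 2 ≤ projPotential B x := by
  have h : infDist x B ≤ ‖x - y‖ := dist_eq_norm x y ▸ infDist_le_dist_of_mem hy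
  have := pow_le_pow_left₀ infDist_nonneg h 2
  have := norm_sub_sq_real x y
  unfold projPotential
  linarith

lemma projPotential_eq_of_mem_projSet (hy : y ∈ projSet B x) :
    projPotential B x = ⟪x, y⟫ - ‖y‖ ^ 2 / 2 := by
  have := norm_sub_sq_real x y
  unfold projPotential
  rw [← hy.2]
  linarith

lemma mem_subgradients_of_mem_projSet (hy : y ∈ projSet B x) :
    y ∈ subgradients (projPotential B) x := by
  intro x'
  rw [projPotential_eq_of_mem_projSet hy, inner_sub_right, real_inner_comm x' y,
    real_inner_comm x y]
  linarith [inner_sub_half_sq_le_projPotential hy.1 x']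

lemma convexHull_projSet_subset_subgradients (B : Set E) (x : E) :
    convexHull ℝ (projSet B x) ⊆ subgradients (projPotential B) x :=
  convexHull_min (fun _ => mem_subgradients_of_mem_projSet) (convex_subgradients _ x)

lemma inner_le_of_mem_subgradients_of_mem_projSet {d : E} {t : ℝ} (ht : 0 < t)
    (hv : v ∈ subgradients (projPotential B) x) (hy : y ∈ projSet B (x + t • d)) :
    ⟪v, d⟫ ≤ ⟪d, y⟫ := by
  have hslope := hv (x + t • d)
  rw [projPotential_eq_of_mem_projSet hy, add_sub_cancel_left, real_inner_smul_right,
    inner_add_left, real_inner_smul_left] at hslope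
  have := inner_sub_half_sq_le_projPotential hy.1 x
  exact le_of_mul_le_mul_left (by linarith) ht

lemma exists_mem_projSet_inner_le [ProperSpace E] (hB : IsClosed B) (hne : B.Nonempty)
    (hv : v ∈ subgradients (projPotential B) x) (d : E) :
    ∃ y ∈ projSet B x, ⟪v, d⟫ ≤ ⟪d, y⟫ := by
  let S : Ioi (0 : ℝ) → Set E := fun ε =>
    {y ∈ B | ‖x - y‖ ≤ infDist x B + ε ∧ ⟪v, d⟫ ≤ ⟪d, y⟫}
  have hS_nonempty (ε : Ioi (0 : ℝ)) : (S ε).Nonempty := by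
    have hε : (0 : ℝ) < ε := ε.2
    set t := (ε : ℝ) / (2 * ‖d‖ + 1)
    have ht : 0 < t := by positivity
    obtain ⟨y, hy⟩ := projSet_nonempty hB hne (x + t • d)
    refine ⟨y, hy.1, ?_, inner_le_of_mem_subgradients_of_mem_projSet ht hv hy⟩
    calc ‖x - y‖ ≤ infDist x B + 2 * ‖x - (x + t • d)‖ := norm_sub_le_of_mem_projSet hy x
    _ = infDist x B + t * (2 * ‖d‖) := by
        rw [sub_add_cancel_left, norm_neg, norm_smul, Real.norm_of_nonneg ht.le]; ring
    _ ≤ infDist x B + t * (2 * ‖d‖ + 1) := by gcongr; linarith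
    _ = infDist x B + ε := by rw [div_mul_cancel₀ _ (by positivity)]
  have hS_closed (ε : Ioi (0 : ℝ)) : IsClosed (S ε) := by
    change IsClosed (B ∩ ({y | ‖x - y‖ ≤ infDist x B + ε} ∩ {y | ⟪v, d⟫ ≤ ⟪d, y⟫}))
    exact hB.inter ((isClosed_le (by fun_prop) (by fun_prop)).inter
      (isClosed_le (by fun_prop) (by fun_prop)))
  have hS_compact (ε : Ioi (0 : ℝ)) : IsCompact (S ε) :=
    (isCompact_closedBall x _).of_isClosed_subset (hS_closed ε) fun y hy => by
      rw [mem_closedBall, dist_comm, dist_eq_norm]; exact hy.2.1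
  have hS_mono : Monotone S := fun ε ε' hεε' y hy =>
    ⟨hy.1, hy.2.1.trans (by gcongr), hy.2.2⟩
  obtain ⟨y, hy⟩ := IsCompact.nonempty_iInter_of_directed_nonempty_isCompact_isClosed S
    hS_mono.directed_ge hS_nonempty hS_compact hS_closed
  rw [mem_iInter] at hy
  obtain ⟨hyB, -, hvy⟩ := hy ⟨1, by norm_num⟩
  refine ⟨y, ⟨hyB, le_antisymm ?_ ?_⟩, hvy⟩
  · exact le_of_forall_pos_le_add fun ε hε => (hy ⟨ε, hε⟩).2.1
  · exact dist_eq_norm x y ▸ infDist_le_dist_of_mem hyB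

lemma subgradients_projPotential_subset_convexHull [FiniteDimensional ℝ E] (hB : IsClosed B)
    (hne : B.Nonempty) (x : E) :
    subgradients (projPotential B) x ⊆ convexHull ℝ (projSet B x) := by
  intro v hv
  rw [← iInter_halfSpaces_eq (convex_convexHull ℝ _)
    (isCompact_projSet hB x).convexHull.isClosed]
  refine mem_iInter.2 fun l => ?_
  obtain ⟨y, hy, hvy⟩ :=
    exists_mem_projSet_inner_le hB hne hv ((InnerProductSpace.toDual ℝ E).symm l)
  refine ⟨y, subset_convexHull ℝ _ hy, ?_⟩
  rwa [real_inner_comm, InnerProductSpace.toDual_symm_apply,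
    InnerProductSpace.toDual_symm_apply] at hvy

lemma subgradients_projPotential_eq_convexHull [FiniteDimensional ℝ E] (hB : IsClosed B)
    (hne : B.Nonempty) (x : E) :
    subgradients (projPotential B) x = convexHull ℝ (projSet B x) :=
  (subgradients_projPotential_subset_convexHull hB hne x).antisymm
    (convexHull_projSet_subset_subgradients B x)

end Subgradients

/-- For a nonempty closed `B ⊆ ℝⁿ` and `xb ∈ ℝⁿ`, the (convex-analysis) subdifferential
of `h_B(x) = ½‖x‖² − ½ dist(x,B)²` at `xb` equals `conv P_B(xb)`; moreover the projection
set `P_B(xb)` is nonempty and compact (hence its convex hull is compact). -/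
theorem stmt_13 {n : ℕ} (B : Set (EuclideanSpace ℝ (Fin n)))
    (hB : B.Nonempty) (hBclosed : IsClosed B)
    (xb : EuclideanSpace ℝ (Fin n)) :
    {v : EuclideanSpace ℝ (Fin n) | ∀ x, ⟪v, x - xb⟫
        ≤ (‖x‖^2/2 - (Metric.infDist x B)^2/2) - (‖xb‖^2/2 - (Metric.infDist xb B)^2/2)}
      = convexHull ℝ {y ∈ B | ‖xb - y‖ = Metric.infDist xb B} ∧
    {y ∈ B | ‖xb - y‖ = Metric.infDist xb B}.Nonempty ∧
    IsCompact {y ∈ B | ‖xb - y‖ = Metric.infDist xb B} ∧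
    IsCompact (convexHull ℝ {y ∈ B | ‖xb - y‖ = Metric.infDist xb B}) :=
  ⟨subgradients_projPotential_eq_convexHull hBclosed hB xb, projSet_nonempty hBclosed hB xb,
    isCompact_projSet hBclosed xb, (isCompact_projSet hBclosed xb).convexHull⟩
end

section
/- Let A and B be nonempty closed subsets of ℝⁿ, let t > 1, let x^0 ∈ A, and let {x^k} satisfy for each k: y^k ∈ conv P_B(x^k) and x^{k+1} ∈ P_A( (1 − 1/t)·x^k + (1/t)·y^k ). Then x^k ∈ A for all k, and for every k ≥ 1 the descent inequality dist(x^k, B)² − dist(x^{k+1}, B)² ≥ (t − 1)·‖x^k − x^{k+1}‖² holds. -/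
/-!
The squared distance to `B` admits the quadratic upper model
`dist(q,B)² ≤ dist(p,B)² + 2⟪p - y, q - p⟫ + ‖q - p‖²` at every `y ∈ conv P_B(p)`: for a nearest
point `y` this is `dist(q,B)² ≤ ‖q - y‖²` expanded around `p`, and the right-hand side is affine
in `y`, so it passes to convex combinations. The projection step onto `A` compares `x^{k+1}`
with the competitor `x^k ∈ A`, which gives `t‖x^{k+1} - x^k‖² ≤ 2⟪y^k - x^k, x^{k+1} - x^k⟫`;
inserting this into the model at `p = x^k`, `q = x^{k+1}` yields the descent inequality.
-/

open Metric RealInnerProductSpace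

variable {E : Type*} [NormedAddCommGroup E] [InnerProductSpace ℝ E]

theorem infDist_sq_le_of_mem_convexHull_nearest {B : Set E} {p q y : E}
    (hy : y ∈ convexHull ℝ {z ∈ B | ‖p - z‖ = infDist p B}) :
    infDist q B ^ 2 ≤ infDist p B ^ 2 + 2 * ⟪p - y, q - p⟫ + ‖q - p‖ ^ 2 := by
  set r := (infDist p B ^ 2 + 2 * ⟪p, q - p⟫ + ‖q - p‖ ^ 2 - infDist q B ^ 2) / 2
  have hhalf : Convex ℝ {z | innerₛₗ ℝ (q - p) z ≤ r} :=
    convex_halfSpace_le (LinearMap.isLinear _) r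
  have hnearest : {z ∈ B | ‖p - z‖ = infDist p B} ⊆ {z | innerₛₗ ℝ (q - p) z ≤ r} := by
    rintro z ⟨hzB, hz⟩
    have hdist : infDist q B ≤ ‖q - z‖ := by
      simpa only [dist_eq_norm] using infDist_le_dist_of_mem hzB
    have hexpand : ‖q - z‖ ^ 2 = ‖p - z‖ ^ 2 + 2 * ⟪p - z, q - p⟫ + ‖q - p‖ ^ 2 := by
      rw [show q - z = (p - z) + (q - p) by abel, norm_add_sq_real]
    have hsq := pow_le_pow_left₀ infDist_nonneg hdist 2
    simp only [Set.mem_ofPred_eq, innerₛₗ_apply_apply, r]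
    rw [hz, inner_sub_left, real_inner_comm (q - p) z] at hexpand
    linarith
  have hyr : ⟪q - p, y⟫ ≤ r := convexHull_min hnearest hhalf hy
  simp only [r] at hyr
  rw [inner_sub_left, real_inner_comm (q - p) y]
  linarith

theorem norm_sub_le_norm_sub_iff_sq_le_inner {w p q : E} :
    ‖w - q‖ ≤ ‖w - p‖ ↔ ‖q - p‖ ^ 2 ≤ 2 * ⟪w - p, q - p⟫ := by
  rw [← sq_le_sq₀ (norm_nonneg _) (norm_nonneg _),
    show w - q = (w - p) - (q - p) by abel, norm_sub_sq_real]
  constructor <;> intro h <;> linarith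

theorem descent_of_gppa_step {A B : Set E} {t : ℝ} (ht : 0 < t) {p y q : E} (hp : p ∈ A)
    (hy : y ∈ convexHull ℝ {z ∈ B | ‖p - z‖ = infDist p B})
    (hq : ‖((1 - 1 / t) • p + (1 / t) • y) - q‖ = infDist ((1 - 1 / t) • p + (1 / t) • y) A) :
    (t - 1) * ‖p - q‖ ^ 2 ≤ infDist p B ^ 2 - infDist q B ^ 2 := by
  set w := (1 - 1 / t) • p + (1 / t) • y
  have hcloser : ‖w - q‖ ≤ ‖w - p‖ := by
    rw [hq, ← dist_eq_norm]
    exact infDist_le_dist_of_mem hp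
  have hwp : w - p = t⁻¹ • (y - p) := by module
  have hstep : t * ‖q - p‖ ^ 2 ≤ 2 * ⟪y - p, q - p⟫ := by
    have h := norm_sub_le_norm_sub_iff_sq_le_inner.mp hcloser
    rw [hwp, real_inner_smul_left] at h
    calc t * ‖q - p‖ ^ 2 ≤ t * (2 * (t⁻¹ * ⟪y - p, q - p⟫)) := by gcongr
      _ = 2 * ⟪y - p, q - p⟫ := by field_simp
  have hmodel := infDist_sq_le_of_mem_convexHull_nearest (q := q) hy
  rw [← neg_sub y p, inner_neg_left] at hmodel
  rw [norm_sub_rev]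
  linarith

theorem stmt_14_general {n : ℕ} (A B : Set (EuclideanSpace ℝ (Fin n)))
    (t : ℝ) (ht : 1 < t)
    (x y : ℕ → EuclideanSpace ℝ (Fin n))
    (hx0 : x 0 ∈ A)
    (hy : ∀ k, y k ∈ convexHull ℝ {z ∈ B | ‖x k - z‖ = Metric.infDist (x k) B})
    (hxstep : ∀ k, x (k+1) ∈
      {z ∈ A | ‖((1 - 1/t) • x k + (1/t) • y k) - z‖
          = Metric.infDist ((1 - 1/t) • x k + (1/t) • y k) A}) :
    (∀ k, x k ∈ A) ∧
    (∀ k ≥ 1, (t - 1) * ‖x k - x (k+1)‖^2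
        ≤ (Metric.infDist (x k) B)^2 - (Metric.infDist (x (k+1)) B)^2) := by
  have hmem : ∀ k, x k ∈ A
    | 0 => hx0
    | k + 1 => (hxstep k).1
  exact ⟨hmem, fun k _ => descent_of_gppa_step (by linarith) (hmem k) (hy k) (hxstep k).2⟩

/-- GPPA for the feasibility problem: if `x^0 ∈ A`, `y^k ∈ conv P_B(x^k)` and
`x^{k+1} ∈ P_A((1 − 1/t)x^k + (1/t)y^k)` with `t > 1`, then `x^k ∈ A` for all `k` and
`dist(x^k,B)² − dist(x^{k+1},B)² ≥ (t − 1)‖x^k − x^{k+1}‖²` for all `k ≥ 1`. -/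
theorem stmt_14 {n : ℕ} (A B : Set (EuclideanSpace ℝ (Fin n)))
    (hA : A.Nonempty) (hAclosed : IsClosed A)
    (hB : B.Nonempty) (hBclosed : IsClosed B)
    (t : ℝ) (ht : 1 < t)
    (x y : ℕ → EuclideanSpace ℝ (Fin n))
    (hx0 : x 0 ∈ A)
    (hy : ∀ k, y k ∈ convexHull ℝ {z ∈ B | ‖x k - z‖ = Metric.infDist (x k) B})
    (hxstep : ∀ k, x (k+1) ∈
      {z ∈ A | ‖((1 - 1/t) • x k + (1/t) • y k) - z‖
          = Metric.infDist ((1 - 1/t) • x k + (1/t) • y k) A}) :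
    (∀ k, x k ∈ A) ∧
    (∀ k ≥ 1, (t - 1) * ‖x k - x (k+1)‖^2
        ≤ (Metric.infDist (x k) B)^2 - (Metric.infDist (x (k+1)) B)^2) :=
  stmt_14_general A B t ht x y hx0 hy hxstep
end

section
/- Let A and B be nonempty closed subsets of ℝⁿ, let t > 1, let x^0 ∈ A, and let {x^k} satisfy for each k: y^k ∈ conv P_B(x^k) and x^{k+1} ∈ P_A( (1 − 1/t)·x^k + (1/t)·y^k ). Then ‖x^k − x^{k+1}‖ → 0 as k → +∞, and the sequence {dist(x^k, B)²} is non-increasing and convergent. -/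
/-!
Write `d = Metric.infDist · B`. For a nearest point `z ∈ P_B(u)` we have
`d(w)² ≤ ‖w - z‖² = ‖w - u‖² + 2⟪w - u, u - z⟫ + d(u)²`; the right-hand side is affine in `z`,
so the bound persists for every `z ∈ conv P_B(u)`. On the other hand `x^{k+1}` is at least as close
to `x^k + t⁻¹ (y^k - x^k)` as `x^k ∈ A` is, i.e. `t ‖x^{k+1} - x^k‖² + 2⟪x^{k+1} - x^k, x^k - y^k⟫ ≤ 0`.
Adding the two gives the sufficient decrease `d(x^{k+1})² + (t - 1) ‖x^k - x^{k+1}‖² ≤ d(x^k)²`,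
and since `t > 1` this forces `d(x^k)²` to decrease to a limit and the steps to vanish.
-/

open Filter Topology
open scoped InnerProductSpace

theorem sufficient_decrease_tendsto {a b : ℕ → ℝ} {c : ℝ} (hc : 0 < c) (ha : ∀ k, 0 ≤ a k)
    (hdec : ∀ k, a (k + 1) + c * b k ^ 2 ≤ a k) :
    Tendsto b atTop (𝓝 0) ∧ Antitone a ∧ ∃ l, Tendsto a atTop (𝓝 l) := by
  have hanti : Antitone a :=
    antitone_nat_of_succ_le fun k => by nlinarith [hdec k, sq_nonneg (b k)]
  have hlim : Tendsto a atTop (𝓝 (⨅ k, a k)) :=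
    tendsto_atTop_ciInf hanti ⟨0, by rintro _ ⟨k, rfl⟩; exact ha k⟩
  have hgap : Tendsto (fun k => (a k - a (k + 1)) / c) atTop (𝓝 0) := by
    simpa using (hlim.sub (hlim.comp (tendsto_add_atTop_nat 1))).div_const c
  have hsq : Tendsto (fun k => b k ^ 2) atTop (𝓝 0) :=
    squeeze_zero (fun k => sq_nonneg _)
      (fun k => by rw [le_div_iff₀ hc]; linarith [hdec k]) hgap
  refine ⟨?_, hanti, _, hlim⟩
  rw [tendsto_zero_iff_abs_tendsto_zero]
  simpa [Function.comp_def, Real.sqrt_sq_eq_abs] using hsq.sqrt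

section Projections

variable {E : Type*} [NormedAddCommGroup E] [InnerProductSpace ℝ E]

theorem sq_infDist_le_of_mem_convexHull_nearest {s : Set E} {u w y : E}
    (hy : y ∈ convexHull ℝ {z ∈ s | ‖u - z‖ = Metric.infDist u s}) :
    Metric.infDist w s ^ 2 ≤ ‖w - u‖ ^ 2 + 2 * ⟪w - u, u - y⟫_ℝ + Metric.infDist u s ^ 2 := by
  set c := ⟪w - u, u⟫_ℝ + (‖w - u‖ ^ 2 + Metric.infDist u s ^ 2 - Metric.infDist w s ^ 2) / 2
    with hc
  have hnearest : {z ∈ s | ‖u - z‖ = Metric.infDist u s} ⊆ {z | ⟪w - u, z⟫_ℝ ≤ c} := by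
    rintro z ⟨hzs, hzu⟩
    have hwz : Metric.infDist w s ≤ ‖w - z‖ := by
      simpa [dist_eq_norm] using Metric.infDist_le_dist_of_mem (x := w) hzs
    have hexpand : ‖w - z‖ ^ 2 = ‖w - u‖ ^ 2 + 2 * ⟪w - u, u - z⟫_ℝ + ‖u - z‖ ^ 2 := by
      rw [← norm_add_sq_real, sub_add_sub_cancel]
    rw [hzu, inner_sub_right] at hexpand
    change _ ≤ c
    nlinarith [Metric.infDist_nonneg (x := w) (s := s)]
  have hyc : ⟪w - u, y⟫_ℝ ≤ c :=
    convexHull_min hnearest (convex_halfSpace_le (innerₛₗ ℝ (w - u)).isLinear c) hy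
  rw [inner_sub_right]
  linarith

theorem norm_sub_sq_le_two_inner_of_norm_sub_le {m p q : E} (h : ‖m - q‖ ≤ ‖m - p‖) :
    ‖q - p‖ ^ 2 ≤ 2 * ⟪q - p, m - p⟫_ℝ := by
  have hexpand : ‖m - q‖ ^ 2 = ‖m - p‖ ^ 2 - 2 * ⟪m - p, q - p⟫_ℝ + ‖q - p‖ ^ 2 := by
    rw [← norm_sub_sq_real, sub_sub_sub_cancel_right]
  rw [real_inner_comm]
  nlinarith [norm_nonneg (m - q)]

theorem relaxed_projection_inner_le {A : Set E} {p q y : E} {t : ℝ} (ht : 0 < t) (hp : p ∈ A)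
    (hq : ‖((1 - 1/t) • p + (1/t) • y) - q‖ = Metric.infDist ((1 - 1/t) • p + (1/t) • y) A) :
    t * ‖q - p‖ ^ 2 + 2 * ⟪q - p, p - y⟫_ℝ ≤ 0 := by
  have hcloser : ‖((1 - 1/t) • p + (1/t) • y) - q‖ ≤ ‖((1 - 1/t) • p + (1/t) • y) - p‖ := by
    rw [hq]
    simpa [dist_eq_norm] using Metric.infDist_le_dist_of_mem (x := (1 - 1/t) • p + (1/t) • y) hp
  have hstep : ((1 - 1/t) • p + (1/t) • y) - p = t⁻¹ • -(p - y) := by module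
  have h := norm_sub_sq_le_two_inner_of_norm_sub_le hcloser
  rw [hstep, inner_smul_right, inner_neg_right] at h
  have hscaled := mul_le_mul_of_nonneg_left h ht.le
  field_simp at hscaled
  linarith

theorem sq_infDist_add_le_of_gppa_step {A B : Set E} {t : ℝ} (ht : 0 < t) {p y q : E}
    (hp : p ∈ A) (hy : y ∈ convexHull ℝ {z ∈ B | ‖p - z‖ = Metric.infDist p B})
    (hq : ‖((1 - 1/t) • p + (1/t) • y) - q‖ = Metric.infDist ((1 - 1/t) • p + (1/t) • y) A) :
    Metric.infDist q B ^ 2 + (t - 1) * ‖p - q‖ ^ 2 ≤ Metric.infDist p B ^ 2 := by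
  have hB := sq_infDist_le_of_mem_convexHull_nearest (w := q) hy
  have hA := relaxed_projection_inner_le ht hp hq
  rw [norm_sub_rev p q]
  linarith

end Projections

theorem stmt_15_general {n : ℕ} (A B : Set (EuclideanSpace ℝ (Fin n)))
    (t : ℝ) (ht : 1 < t)
    (x y : ℕ → EuclideanSpace ℝ (Fin n))
    (hx0 : x 0 ∈ A)
    (hy : ∀ k, y k ∈ convexHull ℝ {z ∈ B | ‖x k - z‖ = Metric.infDist (x k) B})
    (hxstep : ∀ k, x (k+1) ∈
      {z ∈ A | ‖((1 - 1/t) • x k + (1/t) • y k) - z‖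
          = Metric.infDist ((1 - 1/t) • x k + (1/t) • y k) A}) :
    Tendsto (fun k => ‖x k - x (k+1)‖) atTop (𝓝 0) ∧
    Antitone (fun k => (Metric.infDist (x k) B)^2) ∧
    ∃ l : ℝ, Tendsto (fun k => (Metric.infDist (x k) B)^2) atTop (𝓝 l) := by
  have hxA : ∀ k, x k ∈ A
    | 0 => hx0
    | k + 1 => (hxstep k).1
  exact sufficient_decrease_tendsto (sub_pos.mpr ht) (fun k => sq_nonneg _) fun k =>
    sq_infDist_add_le_of_gppa_step (by linarith) (hxA k) (hy k) (hxstep k).2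

/-- GPPA for the feasibility problem: under the same iteration as in the descent lemma,
`‖x^k − x^{k+1}‖ → 0` and the sequence `{dist(x^k,B)²}` is non-increasing and convergent. -/
theorem stmt_15 {n : ℕ} (A B : Set (EuclideanSpace ℝ (Fin n)))
    (hA : A.Nonempty) (hAclosed : IsClosed A)
    (hB : B.Nonempty) (hBclosed : IsClosed B)
    (t : ℝ) (ht : 1 < t)
    (x y : ℕ → EuclideanSpace ℝ (Fin n))
    (hx0 : x 0 ∈ A)
    (hy : ∀ k, y k ∈ convexHull ℝ {z ∈ B | ‖x k - z‖ = Metric.infDist (x k) B})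
    (hxstep : ∀ k, x (k+1) ∈
      {z ∈ A | ‖((1 - 1/t) • x k + (1/t) • y k) - z‖
          = Metric.infDist ((1 - 1/t) • x k + (1/t) • y k) A}) :
    Tendsto (fun k => ‖x k - x (k+1)‖) atTop (𝓝 0) ∧
    Antitone (fun k => (Metric.infDist (x k) B)^2) ∧
    ∃ l : ℝ, Tendsto (fun k => (Metric.infDist (x k) B)^2) atTop (𝓝 l) :=
  stmt_15_general A B t ht x y hx0 hy hxstep
end
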